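/- arXiv:1101.0983 — 15 statements merged into one kernel-verified Lean document; each statement's English description precedes it below -/
import Mathlib

section
/- For all nonnegative integers ℓ and m, the binomial identity C(ℓ,m)·C(ℓ+m,m) = ∑_{k=0}^{m} C(2m, m+k)·C(ℓ-m, k)·C(ℓ+m+k, k) holds. -/
/-!
Write `ℓ = n + m`. Expanding `C(n+2m+k, k) = ∑ⱼ C(n+2m, j) C(k, j)` by Vandermonde and exchanging
the sums, the inner sum over `k` collapses, by `C(n,k) C(k,j) = C(n,j) C(n-j,k-j)` and Vandermonde
again, to `C(n,j) C(n-j+2m, m-j)`. Since `C(n+2m,j) C(n+2m-j,m-j) = C(n+2m,m) C(m,j)`, what is left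
is `C(n+2m,m) ∑ⱼ C(n,j) C(m,j) = C(n+2m,m) C(n+m,m)`, once more by Vandermonde.
-/

open Finset

namespace Nat

theorem add_choose_eq_sum_range (a b k : ℕ) :
    (a + b).choose k = ∑ i ∈ range (k + 1), a.choose i * b.choose (k - i) := by
  rw [add_choose_eq, Nat.sum_antidiagonal_eq_sum_range_succ_mk]

theorem add_choose_self_eq_sum_range (a : ℕ) {k m : ℕ} (hk : k ≤ m) :
    (a + k).choose k = ∑ j ∈ range (m + 1), a.choose j * k.choose j := by
  rw [add_choose_eq_sum_range]
  refine sum_subset_zero_on_sdiff (range_subset_range.2 (by omega)) ?_ ?_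
  · intro j hj
    simp only [mem_sdiff, mem_range] at hj
    rw [choose_eq_zero_of_lt (by omega : k < j), Nat.mul_zero]
  · intro j hj
    rw [choose_symm (mem_range_succ_iff.1 hj)]

theorem sum_choose_sub_mul_choose_mul_choose (n p : ℕ) {j m : ℕ} (hj : j ≤ m) :
    ∑ k ∈ range (m + 1), p.choose (m - k) * (n.choose k * k.choose j) =
      n.choose j * (n - j + p).choose (m - j) := by
  have hlow : ∑ k ∈ range j, p.choose (m - k) * (n.choose k * k.choose j) = 0 :=
    sum_eq_zero fun k hk => by
      rw [choose_eq_zero_of_lt (mem_range.1 hk), Nat.mul_zero, Nat.mul_zero]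
  rw [← sum_range_add_sum_Ico _ (by omega : j ≤ m + 1), hlow, Nat.zero_add, sum_Ico_eq_sum_range,
    show m + 1 - j = m - j + 1 by omega, add_choose_eq_sum_range, mul_sum]
  refine sum_congr rfl fun i _ => ?_
  rw [choose_mul (by omega), Nat.add_sub_cancel_left, show m - (j + i) = m - j - i by omega]
  ring

theorem add_choose_mul_choose_mul_choose_sub_add (n p : ℕ) {j m : ℕ} (hj : j ≤ m) :
    (n + p).choose j * (n.choose j * (n - j + p).choose (m - j)) =
      (n + p).choose m * (n.choose j * m.choose j) := by
  rcases le_or_gt j n with hjn | hnj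
  · rw [show n - j + p = n + p - j by omega, mul_left_comm ((n + p).choose m), choose_mul hj,
      mul_left_comm]
  · simp [choose_eq_zero_of_lt hnj]

end Nat

open Nat in
theorem pfaff_saalschutz_special (ℓ m : ℕ) (h : m ≤ ℓ) :
    ℓ.choose m * (ℓ + m).choose m =
      ∑ k ∈ range (m + 1),
        (2 * m).choose (m + k) * (ℓ - m).choose k * (ℓ + m + k).choose k := by
  obtain ⟨n, rfl⟩ := Nat.exists_eq_add_of_le' h
  have hN : n + m + m = n + 2 * m := by ring
  calc (n + m).choose m * (n + m + m).choose m
      = ∑ j ∈ range (m + 1), (n + 2 * m).choose m * (n.choose j * m.choose j) := by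
        rw [add_choose_self_eq_sum_range n le_rfl, hN, Nat.mul_comm, mul_sum]
    _ = ∑ j ∈ range (m + 1), (n + 2 * m).choose j *
          ∑ k ∈ range (m + 1), (2 * m).choose (m - k) * (n.choose k * k.choose j) := by
        refine sum_congr rfl fun j hj => ?_
        have hjm := mem_range_succ_iff.1 hj
        rw [sum_choose_sub_mul_choose_mul_choose n (2 * m) hjm,
          add_choose_mul_choose_mul_choose_sub_add n (2 * m) hjm]
    _ = ∑ k ∈ range (m + 1), (2 * m).choose (m - k) * n.choose k *
          ∑ j ∈ range (m + 1), (n + 2 * m).choose j * k.choose j := by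
        simp only [mul_sum]
        rw [sum_comm]
        exact sum_congr rfl fun k _ => sum_congr rfl fun j _ => by ring
    _ = _ := by
        refine sum_congr rfl fun k hk => ?_
        have hkm := mem_range_succ_iff.1 hk
        rw [Nat.add_sub_cancel, hN, ← add_choose_self_eq_sum_range _ hkm,
          choose_symm_of_eq_add (by omega : 2 * m = (m + k) + (m - k))]
end

section
/- For all nonnegative integers ℓ, the Apéry polynomial satisfies A_ℓ(x) = ∑_{m=0}^{ℓ} C(2m,m) x^m ∑_{k=0}^{m} C(m,k)·C(m+k,k)·C(ℓ, m+k)·C(ℓ+m+k, m+k), where A_ℓ(x) = ∑_{k=0}^{ℓ} C(ℓ,k)^2 C(ℓ+k,k)^2 x^k. -/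
/-!
Compare coefficients of `x ^ m`. Multiplying the inner sum by `C(2m, m)` and applying the
subset-of-a-subset identity `C(a, b) C(b, c) = C(a, c) C(a - c, b - c)` three times turns it into
`C(ℓ, m) C(ℓ + m, m) ∑ₖ C(2m, m + k) C(ℓ - m, k) C(ℓ + m + k, k)`. Expanding `C(ℓ + m + k, k)` by
Vandermonde and exchanging the order of summation, Vandermonde's identity applied twice more
evaluates the last sum to `C(ℓ, m) C(ℓ + m, m)`.
-/

open Finset

namespace Nat

theorem sum_range_choose_mul_choose_add (a s r : ℕ) :
    ∑ i ∈ range (r + 1), a.choose i * (s + r).choose (s + i) = (a + (s + r)).choose r := by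
  rw [add_choose_eq, Finset.Nat.sum_antidiagonal_eq_sum_range_succ_mk]
  refine sum_congr rfl fun i hi => ?_
  rw [choose_symm_of_eq_add (by grind : s + r = (s + i) + (r - i))]

theorem add_choose_eq_sum_range_choose_mul_choose {a b N : ℕ} (hb : b ≤ N) :
    (a + b).choose b = ∑ j ∈ range (N + 1), a.choose j * b.choose j := by
  have h := sum_range_choose_mul_choose_add a 0 b
  simp only [zero_add] at h
  rw [← h]
  refine sum_subset (range_subset_range.2 (by omega)) fun j _ hj => ?_
  rw [choose_eq_zero_of_lt (by grind : b < j), mul_zero]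

theorem sum_range_choose_two_mul_add_mul_choose_mul_choose (n : ℕ) {m j : ℕ} (hj : j ≤ m) :
    ∑ k ∈ range (m + 1), (2 * m).choose (m + k) * n.choose k * k.choose j =
      n.choose j * (n - j + 2 * m).choose (m - j) := by
  rw [show m + 1 = j + (m - j + 1) by omega, sum_range_add,
    sum_eq_zero fun k hk => by rw [choose_eq_zero_of_lt (mem_range.1 hk), mul_zero], zero_add]
  have h := sum_range_choose_mul_choose_add (n - j) (m + j) (m - j)
  rw [show m + j + (m - j) = 2 * m by omega] at h
  rw [← h, mul_sum]
  refine sum_congr rfl fun i _ => ?_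
  rw [mul_assoc, choose_mul (le_add_right j i), Nat.add_sub_cancel_left, ← add_assoc]
  ring

theorem sum_range_choose_two_mul_add_mul_choose_mul_add_choose (n m : ℕ) :
    ∑ k ∈ range (m + 1), (2 * m).choose (m + k) * n.choose k * (n + 2 * m + k).choose k =
      (n + m).choose m * (n + 2 * m).choose m := by
  have expand : ∀ k ∈ range (m + 1),
      (2 * m).choose (m + k) * n.choose k * (n + 2 * m + k).choose k =
        ∑ j ∈ range (m + 1), (n + 2 * m).choose j *
          ((2 * m).choose (m + k) * n.choose k * k.choose j) := by
    intro k hk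
    rw [add_choose_eq_sum_range_choose_mul_choose (mem_range_succ_iff.1 hk), mul_sum]
    exact sum_congr rfl fun j _ => by ring
  calc _ = ∑ j ∈ range (m + 1), (n + 2 * m).choose j *
        ∑ k ∈ range (m + 1), (2 * m).choose (m + k) * n.choose k * k.choose j := by
        rw [sum_congr rfl expand, sum_comm]
        simp_rw [mul_sum]
    _ = ∑ j ∈ range (m + 1), (n + 2 * m).choose m * (n.choose j * m.choose j) := by
        refine sum_congr rfl fun j hj => ?_
        have hjm := mem_range_succ_iff.1 hj
        rw [sum_range_choose_two_mul_add_mul_choose_mul_choose n hjm, ← mul_assoc]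
        rcases le_or_gt j n with hjn | hnj
        · rw [mul_left_comm, choose_mul hjm, show n + 2 * m - j = n - j + 2 * m by omega]
          ring
        · simp [choose_eq_zero_of_lt hnj]
    _ = _ := by rw [← mul_sum, ← add_choose_eq_sum_range_choose_mul_choose le_rfl, mul_comm]

end Nat

theorem apery_coeff_eq {ℓ m : ℕ} (hm : m ≤ ℓ) :
    ℓ.choose m ^ 2 * (ℓ + m).choose m ^ 2 =
      (2 * m).choose m * ∑ k ∈ range (m + 1),
        m.choose k * (m + k).choose k * ℓ.choose (m + k) * (ℓ + m + k).choose (m + k) := by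
  have h := Nat.sum_range_choose_two_mul_add_mul_choose_mul_add_choose (ℓ - m) m
  rw [show ℓ - m + 2 * m = ℓ + m by omega, Nat.sub_add_cancel hm] at h
  calc ℓ.choose m ^ 2 * (ℓ + m).choose m ^ 2
      = ∑ k ∈ range (m + 1), ℓ.choose m * (ℓ + m).choose m *
          ((2 * m).choose (m + k) * (ℓ - m).choose k * (ℓ + m + k).choose k) := by
        rw [← mul_sum, h]; ring
    _ = _ := by
      rw [mul_sum]
      refine sum_congr rfl fun k _ => ?_
      have h2m : (2 * m).choose (m + k) * (m + k).choose m = (2 * m).choose m * m.choose k := by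
        rw [Nat.choose_mul (Nat.le_add_right m k)]; congr 2 <;> omega
      have hℓ : ℓ.choose (m + k) * (m + k).choose m = ℓ.choose m * (ℓ - m).choose k := by
        rw [Nat.choose_mul (Nat.le_add_right m k), Nat.add_sub_cancel_left]
      have hℓmk : (ℓ + m + k).choose (m + k) * (m + k).choose k =
          (ℓ + m + k).choose k * (ℓ + m).choose m := by
        rw [Nat.choose_mul (Nat.le_add_left k m)]; congr 2 <;> omega
      calc _ = (2 * m).choose (m + k) * (ℓ.choose (m + k) * (m + k).choose m) *
            ((ℓ + m + k).choose (m + k) * (m + k).choose k) := by rw [hℓ, hℓmk]; ring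
        _ = (2 * m).choose m * m.choose k * (m + k).choose k * ℓ.choose (m + k) *
            (ℓ + m + k).choose (m + k) := by rw [← h2m, Nat.choose_symm_add]; ring
        _ = _ := by ring

theorem apery_polynomial_expansion (ℓ : ℕ) (x : ℤ) :
    ∑ k ∈ range (ℓ + 1),
        (ℓ.choose k : ℤ) ^ 2 * ((ℓ + k).choose k : ℤ) ^ 2 * x ^ k =
      ∑ m ∈ range (ℓ + 1), ((2 * m).choose m : ℤ) * x ^ m *
        ∑ k ∈ range (m + 1),
          (m.choose k : ℤ) * ((m + k).choose k : ℤ) * (ℓ.choose (m + k) : ℤ) *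
            ((ℓ + m + k).choose (m + k) : ℤ) := by
  refine sum_congr rfl fun m hm => ?_
  have h := congrArg (Nat.cast : ℕ → ℤ) (apery_coeff_eq (mem_range_succ_iff.1 hm))
  push_cast at h
  linear_combination x ^ m * h
end

section
/- For all nonnegative integers k and positive integers n with k ≤ n-1 (and indeed for all k), ∑_{ℓ=k}^{n-1} (-1)^ℓ (2ℓ+1) C(ℓ,k) C(ℓ+k,k) = (-1)^{n-1} · n · C(n-1,k) · C(n+k,k). -/
/-!
Since `(ℓ + 1) * C(ℓ, k) = (ℓ + 1 - k) * C(ℓ + 1, k)` and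
`(ℓ + 2) * C(ℓ + 2 + k, k) = (ℓ + 2 + k) * C(ℓ + 1 + k, k)`, the right-hand side
`(-1)^m (m + 1) C(m, k) C(m + 1 + k, k)` has successive differences equal to the summands, so
the identity follows by telescoping (induction on `m = n - 1`). Summands with `ℓ < k` vanish, so
the sum may start at `0`.
-/

open Finset

theorem Nat.cast_choose_mul_succ_eq {R : Type*} [CommRing R] (n k : ℕ) :
    (n.choose k : R) * (n + 1) = ((n + 1).choose k : R) * (n + 1 - k) := by
  by_cases hk : k ≤ n + 1
  · have h := congrArg (Nat.cast : ℕ → R) (Nat.choose_mul_succ_eq n k)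
    push_cast [Nat.cast_sub hk] at h
    exact h
  · simp [Nat.choose_eq_zero_of_lt (by omega : n < k),
      Nat.choose_eq_zero_of_lt (by omega : n + 1 < k)]

theorem Nat.add_choose_mul_succ_eq (n k : ℕ) :
    (n + k).choose k * (n + k + 1) = (n + 1 + k).choose k * (n + 1) := by
  rw [← Nat.choose_symm_add, ← Nat.choose_symm_add, mul_comm, Nat.add_one_mul_choose_eq,
    Nat.add_right_comm]

theorem sum_range_neg_one_pow_mul_choose_mul_add_choose (m k : ℕ) :
    ∑ ℓ ∈ range (m + 1),
        (-1 : ℤ) ^ ℓ * (2 * ℓ + 1) * (ℓ.choose k : ℤ) * ((ℓ + k).choose k : ℤ) =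
      (-1 : ℤ) ^ m * (m + 1) * (m.choose k : ℤ) * ((m + 1 + k).choose k : ℤ) := by
  induction m with
  | zero => rcases k with _ | k <;> simp
  | succ m ih =>
    rw [sum_range_succ, ih]
    have hlow := Nat.cast_choose_mul_succ_eq (R := ℤ) m k
    have hupp := congrArg (Nat.cast : ℕ → ℤ) (Nat.add_choose_mul_succ_eq (m + 1) k)
    push_cast at hlow hupp ⊢
    linear_combination (-1 : ℤ) ^ m * ((m + 1 + k).choose k : ℤ) * hlow
      - (-1 : ℤ) ^ m * ((m + 1).choose k : ℤ) * hupp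

theorem sum_Icc_eq_sum_range_of_eq_zero {M : Type*} [AddCommMonoid M] (k m : ℕ) (f : ℕ → M)
    (hf : ∀ ℓ < k, f ℓ = 0) :
    ∑ ℓ ∈ Icc k m, f ℓ = ∑ ℓ ∈ range (m + 1), f ℓ := by
  refine sum_subset (fun ℓ hℓ => ?_) (fun ℓ hrange hℓ => hf ℓ ?_)
  all_goals
    simp only [mem_Icc, mem_range, not_and, not_le] at *
    omega

theorem alternating_sum_identity (n : ℕ) (hn : 0 < n) (k : ℕ) :
    ∑ ℓ ∈ Icc k (n - 1),
        (-1 : ℤ) ^ ℓ * (2 * ℓ + 1) * (ℓ.choose k : ℤ) * ((ℓ + k).choose k : ℤ) =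
      (-1 : ℤ) ^ (n - 1) * n * ((n - 1).choose k : ℤ) * ((n + k).choose k : ℤ) := by
  obtain ⟨m, rfl⟩ := Nat.exists_eq_add_of_le' hn
  rw [Nat.add_sub_cancel, sum_Icc_eq_sum_range_of_eq_zero _ _ _
      (fun ℓ h => by simp [Nat.choose_eq_zero_of_lt h]),
    sum_range_neg_one_pow_mul_choose_mul_add_choose]
  push_cast
  ring
end

section
/- For every positive integer n and every integer x, (1/n) ∑_{k=0}^{n-1} (-1)^k (2k+1) A_k(x) = (-1)^{n-1} ∑_{m=0}^{n-1} C(2m,m) x^m ∑_{k=0}^{m} C(m,k) C(m+k,k) C(n-1, m+k) C(n+m+k, m+k). -/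
open Finset

/-!
Write `chooseProd a b j = C(a,j) C(b+j,j)`, so that the coefficient of `x^m` in `A_k(x)` is
`chooseProd k k m ^ 2`. The heart of the proof is the identity
`C(2m,m) ∑_k chooseProd m m k * chooseProd n n (m+k) = chooseProd n n m ^ 2`,
proved by the Wilf–Zeilberger method: both sides satisfy the same first-order recurrence in `n`.
The Pascal-type relation
`(a+b+2) chooseProd (a+1) b j = (b+1) chooseProd (a+1) (b+1) j + (a+1) chooseProd a b j`
then writes `(2n+1) A_n(x)` as a sum of two consecutive right-hand sides, up to sign, so the
alternating sum telescopes coefficientwise.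
-/

namespace Apery

lemma cast_choose_mul_succ {R : Type*} [Ring R] (n k : ℕ) :
    (n.choose k : R) * (n + 1) = (n + 1).choose k * (n + 1 - k) := by
  rcases le_or_gt k (n + 1) with h | h
  · have := congrArg (Nat.cast (R := R)) (Nat.choose_mul_succ_eq n k)
    push_cast [Nat.cast_sub h] at this
    exact this
  · simp [Nat.choose_eq_zero_of_lt h, Nat.choose_eq_zero_of_lt (n.lt_succ_self.trans h)]

lemma cast_choose_succ_right {R : Type*} [Ring R] (n k : ℕ) :
    (n.choose (k + 1) : R) * (k + 1) = n.choose k * (n - k) := by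
  rcases le_or_gt k n with h | h
  · have := congrArg (Nat.cast (R := R)) (Nat.choose_succ_right_eq n k)
    push_cast [Nat.cast_sub h] at this
    exact this
  · simp [Nat.choose_eq_zero_of_lt h, Nat.choose_eq_zero_of_lt (h.trans k.lt_succ_self)]

def chooseProd (a b j : ℕ) : ℤ := a.choose j * (b + j).choose j

lemma chooseProd_eq_zero_of_lt {a j : ℕ} (b : ℕ) (h : a < j) : chooseProd a b j = 0 := by
  simp [chooseProd, Nat.choose_eq_zero_of_lt h]

lemma chooseProd_self_self (m : ℕ) : chooseProd m m m = (2 * m).choose m := by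
  simp [chooseProd, two_mul]

lemma succ_mul_chooseProd (a b j : ℕ) :
    (a + 1 : ℤ) * chooseProd a b j = (a + 1 - j) * chooseProd (a + 1) b j := by
  unfold chooseProd
  linear_combination ((b + j).choose j : ℤ) * cast_choose_mul_succ (R := ℤ) a j

lemma chooseProd_succ_middle (a b j : ℕ) :
    (b + 1 + j : ℤ) * chooseProd a b j = (b + 1) * chooseProd a (b + 1) j := by
  have h := cast_choose_mul_succ (R := ℤ) (b + j) j
  rw [show b + j + 1 = b + 1 + j by omega] at h
  push_cast at h
  unfold chooseProd
  linear_combination (a.choose j : ℤ) * h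

lemma chooseProd_succ_right (a b j : ℕ) :
    (j + 1 : ℤ) ^ 2 * chooseProd a b (j + 1) = (a - j) * (b + j + 1) * chooseProd a b j := by
  have h₁ := cast_choose_succ_right (R := ℤ) a j
  have h₂ : ((b + j + 1).choose (j + 1) : ℤ) * (j + 1) = (b + j).choose j * (b + j + 1) := by
    exact_mod_cast (Nat.add_one_mul_choose_eq (b + j) j).symm.trans (mul_comm _ _)
  unfold chooseProd
  rw [← add_assoc]
  linear_combination ((b + j + 1).choose (j + 1) * (j + 1) : ℤ) * h₁ + (a.choose j * (a - j) : ℤ) * h₂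

lemma chooseProd_succ_succ (n m : ℕ) :
    (n + 1 - m : ℤ) * chooseProd (n + 1) (n + 1) m = (n + 1 + m) * chooseProd n n m := by
  have h₁ := succ_mul_chooseProd n n m
  have h₂ := chooseProd_succ_middle (n + 1) n m
  refine mul_left_cancel₀ (a := (n + 1 : ℤ)) (by positivity) ?_
  linear_combination -(n + 1 - m : ℤ) * h₂ - (n + 1 + m : ℤ) * h₁

def wzSum (a b m : ℕ) : ℤ := ∑ k ∈ range (m + 1), chooseProd m m k * chooseProd a b (m + k)

/-- The WZ certificate of the summand `chooseProd m m k * chooseProd n n (m + k)`, as found by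
Zeilberger's algorithm. -/
def wzCert (n m k : ℕ) : ℤ := k ^ 2 * (k + m) * chooseProd m m k * chooseProd (n + 1) n (m + k)

lemma wzCert_succ (n m k : ℕ) :
    wzCert n m (k + 1) = (m - k) * (n + 1 - m - k) * (n + 1 + m + k) *
      (chooseProd m m k * chooseProd (n + 1) n (m + k)) := by
  have h₁ := chooseProd_succ_right m m k
  have h₂ := chooseProd_succ_right (n + 1) n (m + k)
  push_cast at h₂
  unfold wzCert
  refine mul_left_cancel₀ (a := (m + k + 1 : ℤ) ^ 2) (by positivity) ?_
  push_cast
  linear_combination (k + 1 + m : ℤ) * (m + k + 1) ^ 2 * chooseProd (n + 1) n (m + k + 1) * h₁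
    + (k + 1 + m : ℤ) * (m - k) * (m + k + 1) * chooseProd m m k * h₂

lemma wz_pair (n m k : ℕ) :
    (n + 1 : ℤ) * (n + 1 - m) ^ 2 * (chooseProd m m k * chooseProd (n + 1) (n + 1) (m + k))
      - (n + 1 : ℤ) * (n + 1 + m) ^ 2 * (chooseProd m m k * chooseProd n n (m + k))
      = -2 * (wzCert n m (k + 1) - wzCert n m k) := by
  have h₁ := chooseProd_succ_middle (n + 1) n (m + k)
  have h₀ := succ_mul_chooseProd n n (m + k)
  push_cast at h₁ h₀
  rw [wzCert_succ, wzCert]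
  linear_combination (-(n + 1 - m : ℤ) ^ 2 * chooseProd m m k) * h₁
    - ((n + 1 + m : ℤ) ^ 2 * chooseProd m m k) * h₀

lemma wzSum_recurrence (n m : ℕ) :
    (n + 1 - m : ℤ) ^ 2 * wzSum (n + 1) (n + 1) m = (n + 1 + m) ^ 2 * wzSum n n m := by
  have hpair := sum_congr rfl (fun k (_ : k ∈ range (m + 1)) => wz_pair n m k)
  have hlast : wzCert n m (m + 1) = 0 := by
    simp [wzCert, chooseProd_eq_zero_of_lt m m.lt_succ_self]
  have hfirst : wzCert n m 0 = 0 := by simp [wzCert]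
  rw [sum_sub_distrib, ← mul_sum, ← mul_sum, ← mul_sum, sum_range_sub, hlast, hfirst] at hpair
  refine mul_left_cancel₀ (a := (n + 1 : ℤ)) (by positivity) ?_
  unfold wzSum
  linear_combination hpair

lemma wzSum_eq_zero_of_lt {a m : ℕ} (b : ℕ) (h : a < m) : wzSum a b m = 0 :=
  sum_eq_zero fun k _ => by rw [chooseProd_eq_zero_of_lt b (by omega), mul_zero]

lemma wzSum_self_self (m : ℕ) : wzSum m m m = (2 * m).choose m := by
  rw [wzSum, sum_range_succ', sum_eq_zero fun k _ => by
    rw [chooseProd_eq_zero_of_lt m (by omega : m < m + (k + 1)), mul_zero]]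
  simp [chooseProd, two_mul]

lemma choose_two_mul_mul_wzSum (n m : ℕ) :
    ((2 * m).choose m : ℤ) * wzSum n n m = chooseProd n n m ^ 2 := by
  rcases lt_or_ge n m with h | h
  · simp [wzSum_eq_zero_of_lt n h, chooseProd_eq_zero_of_lt n h]
  induction n, h using Nat.le_induction with
  | base => rw [wzSum_self_self, chooseProd_self_self]; ring
  | succ n hmn ih =>
    have hpos : (0 : ℤ) < n + 1 - m := by
      have := (Nat.cast_le (α := ℤ)).2 hmn
      linarith
    refine mul_left_cancel₀ (pow_ne_zero 2 hpos.ne') ?_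
    have hrec := wzSum_recurrence n m
    have hP := chooseProd_succ_succ n m
    linear_combination ((2 * m).choose m : ℤ) * hrec + (n + 1 + m : ℤ) ^ 2 * ih
      - ((n + 1 - m) * chooseProd (n + 1) (n + 1) m + (n + 1 + m) * chooseProd n n m) * hP

lemma add_add_two_mul_chooseProd (a b j : ℕ) :
    (a + b + 2 : ℤ) * chooseProd (a + 1) b j
      = (b + 1) * chooseProd (a + 1) (b + 1) j + (a + 1) * chooseProd a b j := by
  linear_combination chooseProd_succ_middle (a + 1) b j - succ_mul_chooseProd a b j

lemma add_add_two_mul_wzSum (a b m : ℕ) :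
    (a + b + 2 : ℤ) * wzSum (a + 1) b m
      = (b + 1) * wzSum (a + 1) (b + 1) m + (a + 1) * wzSum a b m := by
  simp only [wzSum, mul_sum, ← sum_add_distrib]
  refine sum_congr rfl fun k _ => ?_
  linear_combination chooseProd m m k * add_add_two_mul_chooseProd a b (m + k)

lemma sum_alternating_chooseProd_sq (N m : ℕ) :
    ∑ k ∈ range (N + 1), (-1 : ℤ) ^ k * (2 * k + 1) * chooseProd k k m ^ 2
      = (-1) ^ N * (N + 1) * ((2 * m).choose m * wzSum N (N + 1) m) := by
  induction N with
  | zero =>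
    rcases m with _ | m
    · simp [chooseProd, wzSum]
    · simp [chooseProd_eq_zero_of_lt 0 m.succ_pos, wzSum_eq_zero_of_lt 1 m.succ_pos]
  | succ N ih =>
    have hrec := add_add_two_mul_wzSum N (N + 1) m
    rw [sum_range_succ, ih, ← choose_two_mul_mul_wzSum]
    push_cast at hrec ⊢
    linear_combination (-1 : ℤ) ^ (N + 1) * ((2 * m).choose m : ℤ) * hrec

end Apery

open Apery in
theorem apery_alternating_sum_formula_general (n : ℕ) (x : ℤ) :
    ∑ k ∈ range n, (-1 : ℤ) ^ k * (2 * k + 1) *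
        (∑ j ∈ range (k + 1),
          (k.choose j : ℤ) ^ 2 * ((k + j).choose j : ℤ) ^ 2 * x ^ j) =
      (-1 : ℤ) ^ (n - 1) * n *
        ∑ m ∈ range n, ((2 * m).choose m : ℤ) * x ^ m *
          ∑ k ∈ range (m + 1),
            (m.choose k : ℤ) * ((m + k).choose k : ℤ) * ((n - 1).choose (m + k) : ℤ) *
              ((n + m + k).choose (m + k) : ℤ) := by
  rcases n with _ | N
  · simp
  have apery_eq : ∀ k ∈ range (N + 1), ∑ j ∈ range (k + 1),
      (k.choose j : ℤ) ^ 2 * ((k + j).choose j : ℤ) ^ 2 * x ^ j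
        = ∑ j ∈ range (N + 1), chooseProd k k j ^ 2 * x ^ j := by
    intro k hk
    rw [← sum_subset (range_subset_range.2 (mem_range.1 hk)) fun j _ hj => ?_]
    · simp only [chooseProd, mul_pow]
    · rw [chooseProd_eq_zero_of_lt k (by simpa using hj), zero_pow two_ne_zero, zero_mul]
  calc _ = ∑ j ∈ range (N + 1), x ^ j *
        ∑ k ∈ range (N + 1), (-1 : ℤ) ^ k * (2 * k + 1) * chooseProd k k j ^ 2 := by
        rw [sum_congr rfl fun k hk => by rw [apery_eq k hk]]
        simp only [mul_sum]
        rw [sum_comm]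
        exact sum_congr rfl fun j _ => sum_congr rfl fun k _ => by ring
    _ = _ := by
      simp only [sum_alternating_chooseProd_sq, Nat.add_sub_cancel, mul_sum, wzSum]
      refine sum_congr rfl fun m _ => sum_congr rfl fun k _ => ?_
      rw [chooseProd, chooseProd, show N + 1 + m + k = N + 1 + (m + k) by omega]
      push_cast
      ring

theorem apery_alternating_sum_formula (n : ℕ) (hn : 0 < n) (x : ℤ) :
    ∑ k ∈ range n, (-1 : ℤ) ^ k * (2 * k + 1) *
        (∑ j ∈ range (k + 1),
          (k.choose j : ℤ) ^ 2 * ((k + j).choose j : ℤ) ^ 2 * x ^ j) =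
      (-1 : ℤ) ^ (n - 1) * n *
        ∑ m ∈ range n, ((2 * m).choose m : ℤ) * x ^ m *
          ∑ k ∈ range (m + 1),
            (m.choose k : ℤ) * ((m + k).choose k : ℤ) * ((n - 1).choose (m + k) : ℤ) *
              ((n + m + k).choose (m + k) : ℤ) :=
  apery_alternating_sum_formula_general n x
end

section
/- Let p be an odd prime and suppose 0 ≤ m + k ≤ p - 1 with m, k nonnegative integers. Then C(p-1, m+k) · C(p+m+k, m+k) ≡ (-1)^{m+k} (mod p^2). -/
/-!
Put `n = m + k < p`. Multiplied by `n!`, the two binomial coefficients become the products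
`∏ (p - i)` and `∏ (p + i)` over `1 ≤ i ≤ n`, so their product times `(n!)²` is
`∏ (p² - i²) ≡ ∏ (-i²) = (-1)ⁿ (n!)² (mod p²)`. As `n < p`, `(n!)²` is prime to `p²` and cancels.
-/

open Finset Nat

lemma Nat.cast_descFactorial_eq_prod_range {R : Type*} [CommRing R] {a n : ℕ} (h : n ≤ a) :
    (a.descFactorial n : R) = ∏ i ∈ range n, ((a : R) - i) := by
  rw [descFactorial_eq_prod_range, cast_prod]
  exact prod_congr rfl fun i hi => Nat.cast_sub ((mem_range.mp hi).le.trans h)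

lemma Int.ModEq.cancel_right_of_isCoprime {a b c m : ℤ} (hc : IsCoprime m c)
    (h : a * c ≡ b * c [ZMOD m]) : a ≡ b [ZMOD m] := by
  rw [Int.modEq_iff_dvd, ← sub_mul] at *
  exact hc.dvd_of_dvd_mul_right h

lemma choose_pred_mul_choose_add_mul_factorial_sq {p n : ℕ} (h : n < p) :
    ((p - 1).choose n * (p + n).choose n * (n ! : ℤ) ^ 2 : ℤ) =
      ∏ i ∈ range n, ((p : ℤ) ^ 2 - (i + 1) ^ 2) := by
  have hdesc : ((p - 1).choose n * n ! : ℤ) = ∏ i ∈ range n, ((p : ℤ) - (i + 1)) := by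
    rw [← cast_mul, mul_comm, ← descFactorial_eq_factorial_mul_choose,
      cast_descFactorial_eq_prod_range (by omega), Nat.cast_sub h.pos]
    exact prod_congr rfl fun i _ => by ring
  have hasc : ((p + n).choose n * n ! : ℤ) = ∏ i ∈ range n, ((p : ℤ) + (i + 1)) := by
    rw [← cast_mul, mul_comm, ← descFactorial_eq_factorial_mul_choose,
      add_descFactorial_eq_ascFactorial, ascFactorial_eq_prod_range]
    push_cast
    exact prod_congr rfl fun i _ => by ring
  calc _ = ((p - 1).choose n * n ! : ℤ) * ((p + n).choose n * n !) := by ring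
    _ = _ := by
      rw [hdesc, hasc, ← prod_mul_distrib]
      exact prod_congr rfl fun i _ => by ring

lemma prod_range_sq_sub_modEq (a : ℤ) (n : ℕ) :
    ∏ i ∈ range n, (a ^ 2 - (i + 1) ^ 2) ≡ (-1) ^ n * (n ! : ℤ) ^ 2 [ZMOD a ^ 2] := by
  calc ∏ i ∈ range n, (a ^ 2 - (i + 1) ^ 2)
      ≡ ∏ i ∈ range n, (-1 * ((i : ℤ) + 1) ^ 2) [ZMOD a ^ 2] :=
        Int.ModEq.prod fun i _ => Int.modEq_iff_dvd.mpr ⟨-1, by ring⟩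
    _ = (-1) ^ n * (n ! : ℤ) ^ 2 := by
      rw [prod_mul_distrib, prod_const, card_range, prod_pow, ← prod_range_add_one_eq_factorial]
      push_cast
      rfl

theorem binom_product_mod_p_squared_general (p : ℕ) (hp : p.Prime)
    (m k : ℕ) (h : m + k ≤ p - 1) :
    ((p - 1).choose (m + k) : ℤ) * ((p + m + k).choose (m + k) : ℤ) ≡
      (-1 : ℤ) ^ (m + k) [ZMOD (p : ℤ) ^ 2] := by
  have hn : m + k < p := by have := hp.pos; omega
  have hcop : IsCoprime ((p : ℤ) ^ 2) (((m + k) ! : ℤ) ^ 2) :=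
    (Nat.isCoprime_iff_coprime.mpr (hp.coprime_factorial_of_lt hn)).pow
  rw [add_assoc]
  refine Int.ModEq.cancel_right_of_isCoprime hcop ?_
  rw [choose_pred_mul_choose_add_mul_factorial_sq hn]
  exact prod_range_sq_sub_modEq p (m + k)

theorem binom_product_mod_p_squared (p : ℕ) (hp : p.Prime) (hodd : Odd p)
    (m k : ℕ) (h : m + k ≤ p - 1) :
    ((p - 1).choose (m + k) : ℤ) * ((p + m + k).choose (m + k) : ℤ) ≡
      (-1 : ℤ) ^ (m + k) [ZMOD (p : ℤ) ^ 2] :=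
  binom_product_mod_p_squared_general p hp m k h
end

section
/- Let p be an odd prime and let m, k be nonnegative integers with 0 ≤ k < p - 1, k ≤ m ≤ p - 1, and m + k ≥ p. Then p^2 divides C(2m, m) · C(m+k, k). -/
theorem p_squared_divides_binom_product_general (p : ℕ) (hp : p.Prime)
    (m k : ℕ) (hkm : k ≤ m) (hm : m ≤ p - 1) (hmk : p ≤ m + k) :
    p ^ 2 ∣ (2 * m).choose m * (m + k).choose k := by
  have hmp : m < p := by have := hp.pos; omega
  have h_central : p ∣ (2 * m).choose m := hp.dvd_choose hmp (by omega) (by omega)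
  have h_second : p ∣ (m + k).choose k := hp.dvd_choose (by omega) (by omega) hmk
  exact pow_two p ▸ mul_dvd_mul h_central h_second

theorem p_squared_divides_binom_product (p : ℕ) (hp : p.Prime) (hodd : Odd p)
    (m k : ℕ) (hk : k < p - 1) (hkm : k ≤ m) (hm : m ≤ p - 1) (hmk : p ≤ m + k) :
    p ^ 2 ∣ (2 * m).choose m * (m + k).choose k :=
  p_squared_divides_binom_product_general p hp m k hkm hm hmk
end

section
/- For every prime p > 3, ∑_{k=0}^{p-1} C(2k,k) (-2)^k ≡ 1 - (4/3)(2^{p-1} - 1) (mod p^2). -/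
/-!
Write `p = 2m + 1` and work in `ZMod (p ^ 2)`, a square-zero extension of `ZMod p` by
`pMul p : c ↦ p * c`. There `x = m + m p` satisfies `2x + 1 = 0`, and comparing the recursions of
`C(2k, k) (-2)^k` and of `C(x, k) 8^k` shows that the two agree for `k < p`. Since `p^2 = 0`,
`k! C(X, k)` is affine along multiples of `p`, so
`C(m + m p, k) = C(m, k) + m (C(m + p, k) - C(m, k))`, and the sum becomes
`9^m + m (F(m + p) - 9^m)` with `F(n) = ∑_{k<p} C(n, k) 8^k`.
Pascal's rule in the upper index gives `F(n + 1) = 9 F(n) - C(n, p - 1) 8^p`. Running it from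
`F(p - 1) = 9^(p-1)` up to `F(m + p)` brings in the terms `C(p + i, p - 1) = p / (i + 1)`, hence
the sum `H = ∑_{l=1}^m 9^(-l) / l` in `ZMod p`. Glaisher's congruence
`C(p, k) = p (-1)^(k-1) / k`, applied to `(3 - 1)^p` and `(3 + 1)^p`, evaluates `3 H` through the
Fermat quotients `u, v` of `2` and `3` (`2^p = 2 + p u`, `3^p = 3 + p v`), and `v` cancels.
-/

open Finset Polynomial
open scoped Nat

theorem Polynomial.eval_add_mul_of_sq_eq_zero {R : Type*} [CommRing R] (P : R[X])
    (a t ε : R) (hε : ε ^ 2 = 0) :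
    P.eval (a + t * ε) = P.eval a + t * (P.eval (a + ε) - P.eval a) := by
  obtain ⟨c, hc⟩ := P.binomExpansion a (t * ε)
  obtain ⟨d, hd⟩ := P.binomExpansion a ε
  rw [hc, hd]
  linear_combination (c * t ^ 2 - t * d) * hε

section CommRing

variable {R : Type*} [CommRing R]

theorem factorial_mul_choose_eq_descPochhammer_eval (n k : ℕ) :
    (k ! * n.choose k : R) = (descPochhammer R k).eval (n : R) := by
  rw [descPochhammer_eval_eq_descFactorial, Nat.descFactorial_eq_factorial_mul_choose,
    Nat.cast_mul]

theorem factorial_mul_centralBinom_mul_neg_two_pow {x : R} (hx : 2 * x + 1 = 0) (k : ℕ) :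
    (k ! * (2 * k).choose k * (-2) ^ k : R) = (descPochhammer R k).eval x * 8 ^ k := by
  induction k with
  | zero => simp
  | succ k ih =>
    have h := congrArg (Nat.cast : ℕ → R) (Nat.succ_mul_centralBinom_succ k)
    simp only [Nat.centralBinom_eq_two_mul_choose] at h
    push_cast at h
    rw [descPochhammer_succ_eval, Nat.factorial_succ]
    push_cast
    linear_combination (k ! * (-2) ^ (k + 1) : R) * h - 4 * (2 * k + 1) * ih
      - 4 * (descPochhammer R k).eval x * 8 ^ k * hx

variable (y : R)

theorem sum_range_choose_mul_pow_of_lt {n N : ℕ} (h : n < N) :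
    ∑ k ∈ range N, (n.choose k : R) * y ^ k = (1 + y) ^ n := by
  have htail : ∑ k ∈ Ico (n + 1) N, (n.choose k : R) * y ^ k = 0 :=
    sum_eq_zero fun k hk => by rw [Nat.choose_eq_zero_of_lt (mem_Ico.1 hk).1]; simp
  rw [← sum_range_add_sum_Ico _ h, htail, add_zero, add_comm, add_pow]
  simp [mul_comm]

theorem sum_range_succ_choose_succ_mul_pow (n q : ℕ) :
    ∑ k ∈ range (q + 1), ((n + 1).choose k : R) * y ^ k =
      (1 + y) * ∑ k ∈ range (q + 1), (n.choose k : R) * y ^ k - n.choose q * y ^ (q + 1) := by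
  induction q with
  | zero => simp
  | succ q ih =>
    rw [sum_range_succ, ih, sum_range_succ (fun k => (n.choose k : R) * y ^ k) (q + 1),
      Nat.choose_succ_succ' n q]
    push_cast
    ring

theorem sum_range_choose_add_mul_pow (n q j : ℕ) :
    ∑ k ∈ range (q + 1), ((n + j).choose k : R) * y ^ k =
      (1 + y) ^ j * ∑ k ∈ range (q + 1), (n.choose k : R) * y ^ k -
        y ^ (q + 1) * ∑ i ∈ range j, (1 + y) ^ (j - 1 - i) * (n + i).choose q := by
  induction j with
  | zero => simp
  | succ j ih =>
    have hsum : ∑ i ∈ range (j + 1), (1 + y) ^ (j + 1 - 1 - i) * ((n + i).choose q : R) =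
        (1 + y) * ∑ i ∈ range j, (1 + y) ^ (j - 1 - i) * (n + i).choose q +
          (n + j).choose q := by
      rw [sum_range_succ, mul_sum, Nat.add_sub_cancel, Nat.sub_self, pow_zero, one_mul]
      congr 1
      refine sum_congr rfl fun i hi => ?_
      rw [show j - i = j - 1 - i + 1 by simp at hi; omega]
      ring
    rw [← add_assoc, sum_range_succ_choose_succ_mul_pow, ih, hsum]
    ring

end CommRing

theorem sum_range_two_mul_pow_add_neg_pow_div {K : Type*} [Field K] (h2 : (2 : K) ≠ 0)
    (x : K) (m : ℕ) :
    ∑ k ∈ range (2 * m), (x ^ (k + 1) + (-x) ^ (k + 1)) / (k + 1) =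
      ∑ l ∈ range m, (x ^ 2) ^ (l + 1) / (l + 1) := by
  induction m with
  | zero => simp
  | succ m ih =>
    rw [show 2 * (m + 1) = 2 * m + 1 + 1 by ring, sum_range_succ, sum_range_succ, ih,
      sum_range_succ, Odd.neg_pow ⟨m, rfl⟩, Even.neg_pow ⟨m + 1, by ring⟩, add_neg_cancel,
      zero_div, add_zero, ← two_mul, ← pow_mul]
    push_cast
    rw [show (2 * m + 1 + 1 : K) = 2 * (m + 1) by ring, mul_div_mul_left _ _ h2,
      show 2 * m + 1 + 1 = 2 * (m + 1) by ring]

namespace ZMod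

variable (p : ℕ)

theorem natCast_ne_zero_of_pos_of_lt {n : ℕ} (h0 : 0 < n) (h : n < p) : (n : ZMod p) ≠ 0 :=
  (natCast_eq_zero_iff n p).not.2 (Nat.not_dvd_of_pos_of_lt h0 h)

theorem natCast_self_sq : (p : ZMod (p ^ 2)) ^ 2 = 0 := by
  rw [← Nat.cast_pow, natCast_self]

def reduceSq : ZMod (p ^ 2) →+* ZMod p :=
  castHom (dvd_pow_self p two_ne_zero) (ZMod p)

def pMul : ZMod p →+ ZMod (p ^ 2) :=
  lift p ⟨(AddMonoidHom.mulLeft (p : ZMod (p ^ 2))).comp (Int.castAddHom _), by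
    simp [← sq, ← Nat.cast_pow]⟩

theorem pMul_intCast (x : ℤ) : pMul p x = p * x :=
  lift_coe _ _ _

theorem pMul_natCast (x : ℕ) : pMul p x = p * x := by
  simpa using pMul_intCast p x

theorem reduceSq_pMul (c : ZMod p) : reduceSq p (pMul p c) = 0 := by
  obtain ⟨z, rfl⟩ := intCast_surjective c
  simp [pMul_intCast]

theorem mul_pMul (x : ZMod (p ^ 2)) (c : ZMod p) :
    x * pMul p c = pMul p (reduceSq p x * c) := by
  obtain ⟨z, rfl⟩ := intCast_surjective c
  obtain ⟨w, rfl⟩ := intCast_surjective x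
  rw [pMul_intCast, map_intCast (reduceSq p), ← Int.cast_mul, pMul_intCast]
  push_cast
  ring

theorem pMul_mul_pMul (a b : ZMod p) : pMul p a * pMul p b = 0 := by
  rw [mul_pMul, reduceSq_pMul, zero_mul, map_zero]

theorem pMul_injective [NeZero p] : Function.Injective (pMul p) := by
  refine (injective_iff_map_eq_zero _).2 fun c hc => ?_
  obtain ⟨z, rfl⟩ := intCast_surjective c
  rw [pMul_intCast, ← Int.cast_natCast, ← Int.cast_mul, intCast_zmod_eq_zero_iff_dvd] at hc
  push_cast at hc
  rw [intCast_zmod_eq_zero_iff_dvd]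
  exact Int.dvd_of_mul_dvd_mul_left (a := (p : ℤ)) (by exact_mod_cast NeZero.ne p)
    (by simpa [sq] using hc)

theorem exists_pMul_of_reduceSq_eq_zero {x : ZMod (p ^ 2)} (h : reduceSq p x = 0) :
    ∃ c, x = pMul p c := by
  obtain ⟨z, rfl⟩ := intCast_surjective x
  rw [map_intCast, intCast_zmod_eq_zero_iff_dvd] at h
  obtain ⟨w, rfl⟩ := h
  exact ⟨w, by rw [pMul_intCast]; push_cast; rfl⟩

variable {p} [Fact p.Prime]

theorem eq_pMul_div_of_natCast_mul_eq {k : ℕ} {x : ZMod (p ^ 2)} {c : ZMod p}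
    (hk : (k : ZMod p) ≠ 0) (h : (k : ZMod (p ^ 2)) * x = pMul p c) : x = pMul p (c / k) := by
  have hx : reduceSq p x = 0 := by
    have h' := congrArg (reduceSq p) h
    rw [map_mul, map_natCast, reduceSq_pMul] at h'
    exact (mul_eq_zero.1 h').resolve_left hk
  obtain ⟨w, rfl⟩ := exists_pMul_of_reduceSq_eq_zero p hx
  rw [mul_pMul, map_natCast] at h
  rw [← pMul_injective p h, mul_div_cancel_left₀ _ hk]

theorem isUnit_factorial {k : ℕ} (hk : k < p) : IsUnit (k ! : ZMod (p ^ 2)) := by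
  rw [isUnit_natCast_iff_not_dvd_pow Fact.out two_pos, Nat.Prime.dvd_factorial Fact.out]
  omega

theorem cast_choose_sub_one {k : ℕ} (hk : k < p) : ((p - 1).choose k : ZMod p) = (-1) ^ k := by
  induction k with
  | zero => simp
  | succ k ih =>
    have hpascal := Nat.choose_succ_succ' (p - 1) k
    rw [Nat.sub_add_cancel (Fact.out : p.Prime).one_le] at hpascal
    have hdvd : ((p.choose (k + 1) : ℕ) : ZMod p) = 0 :=
      (natCast_eq_zero_iff _ _).2 ((Fact.out : p.Prime).dvd_choose_self k.succ_ne_zero hk)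
    rw [hpascal, Nat.cast_add, ih (by omega)] at hdvd
    linear_combination hdvd

theorem choose_prime_eq_pMul {k : ℕ} (hk0 : 0 < k) (hk : k < p) :
    (p.choose k : ZMod (p ^ 2)) = pMul p ((-1) ^ (k - 1) / k) := by
  have h := Nat.add_one_mul_choose_eq (p - 1) (k - 1)
  rw [Nat.sub_add_cancel (Fact.out : p.Prime).one_le, Nat.sub_add_cancel hk0] at h
  apply eq_pMul_div_of_natCast_mul_eq (natCast_ne_zero_of_pos_of_lt p hk0 hk)
  rw [← cast_choose_sub_one (show k - 1 < p by omega), pMul_natCast, ← Nat.cast_mul,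
    ← Nat.cast_mul, h, mul_comm]

theorem choose_add_prime_eq_pMul {r : ℕ} (hr : r + 1 < p) :
    ((p + r).choose (p - 1) : ZMod (p ^ 2)) = pMul p (1 / (r + 1)) := by
  have hlucas : ((p + r).choose r : ZMod p) = 1 := by
    have h := Choose.choose_modEq_choose_mod_mul_choose_div_nat (p := p) (n := p + r) (k := r)
    rw [← natCast_eq_natCast_iff] at h
    simpa [Nat.mod_eq_of_lt (show r < p by omega), Nat.div_eq_of_lt (show r < p by omega),
      Nat.add_div_left, (Fact.out : p.Prime).pos] using h
  have hsucc := Nat.choose_succ_right_eq (p + r) r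
  rw [Nat.add_sub_cancel] at hsucc
  rw [Nat.choose_symm_of_eq_add (show p + r = p - 1 + (r + 1) by omega)]
  exact_mod_cast eq_pMul_div_of_natCast_mul_eq (natCast_ne_zero_of_pos_of_lt p r.succ_pos hr) <| by
    rw [← hlucas, pMul_natCast, ← Nat.cast_mul, ← Nat.cast_mul, mul_comm, hsucc, mul_comm]

theorem add_pow_prime_eq (a b : ZMod (p ^ 2)) :
    (a + b) ^ p = a ^ p + b ^ p + pMul p (∑ k ∈ range (p - 1),
      (-1) ^ k / (k + 1) * reduceSq p a ^ (k + 1) * reduceSq p b ^ (p - 1 - k)) := by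
  have hp := (Fact.out : p.Prime).two_le
  have hmid : ∑ k ∈ range (p - 1),
      a ^ (k + 1) * b ^ (p - (k + 1)) * (p.choose (k + 1) : ZMod (p ^ 2)) =
        ∑ k ∈ range (p - 1), pMul p
          ((-1) ^ k / (k + 1) * reduceSq p a ^ (k + 1) * reduceSq p b ^ (p - 1 - k)) := by
    refine sum_congr rfl fun k hk => ?_
    rw [mem_range] at hk
    rw [choose_prime_eq_pMul (by omega : 0 < k + 1) (by omega), mul_pMul, Nat.add_sub_cancel,
      show p - (k + 1) = p - 1 - k by omega, map_mul (reduceSq p), map_pow, map_pow]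
    push_cast
    congr 1
    ring
  rw [add_pow, show p + 1 = p - 1 + 1 + 1 by omega, sum_range_succ, sum_range_succ', hmid,
    ← map_sum, Nat.sub_add_cancel (by omega : 1 ≤ p)]
  simp only [pow_zero, Nat.sub_zero, Nat.choose_zero_right, Nat.sub_self, Nat.choose_self,
    Nat.cast_one, one_mul, mul_one]
  abel

theorem sum_neg_one_pow_div_mul_pow_mul_pow (a : ZMod p) {b : ZMod p} (hb : b ≠ 0) :
    ∑ k ∈ range (p - 1), (-1) ^ k / (k + 1) * a ^ (k + 1) * b ^ (p - 1 - k) =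
      -b * ∑ k ∈ range (p - 1), (-a * b⁻¹) ^ (k + 1) / (k + 1) := by
  rw [mul_sum]
  refine sum_congr rfl fun k hk => ?_
  have hpow : b ^ (p - 1 - k) = b * b⁻¹ ^ (k + 1) := by
    rw [pow_sub₀ _ hb (by simp at hk; omega), pow_card_sub_one_eq_one hb, inv_pow, pow_succ]
    field_simp
  rw [hpow]
  ring

theorem three_mul_sum_inv_nine_pow_div {m : ℕ} (hm : 2 * m + 1 = p) (h3 : (3 : ZMod p) ≠ 0)
    {u v : ZMod p} (hu : (2 : ZMod (p ^ 2)) ^ p = 2 + pMul p u)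
    (hv : (3 : ZMod (p ^ 2)) ^ p = 3 + pMul p v) :
    3 * ∑ l ∈ range m, (9⁻¹ : ZMod p) ^ (l + 1) / (l + 1) = 2 * v - 5 * u := by
  have h2 : (2 : ZMod p) ≠ 0 := by
    have := (Fact.out : p.Prime).two_le
    exact_mod_cast natCast_ne_zero_of_pos_of_lt p two_pos (by omega)
  have hT := sum_range_two_mul_pow_add_neg_pow_div h2 (3⁻¹ : ZMod p) m
  rw [show (3⁻¹ : ZMod p) ^ 2 = 9⁻¹ by norm_num, show 2 * m = p - 1 by omega] at hT
  simp only [add_div, sum_add_distrib] at hT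
  have g1 := add_pow_prime_eq (p := p) (-1) 3
  have g2 := add_pow_prime_eq (p := p) 1 3
  simp only [map_neg, map_one, map_ofNat, sum_neg_one_pow_div_mul_pow_mul_pow _ h3, neg_neg,
    one_mul, neg_one_mul] at g1 g2
  rw [Odd.neg_one_pow ⟨m, hm.symm⟩, show (-1 : ZMod (p ^ 2)) + 3 = 2 by norm_num, hu, hv] at g1
  rw [show (1 : ZMod (p ^ 2)) + 3 = 2 ^ 2 by norm_num, ← pow_mul, mul_comm, pow_mul, hu, hv,
    one_pow] at g2
  have e1 : u = v + -3 * ∑ k ∈ range (p - 1), (3⁻¹ : ZMod p) ^ (k + 1) / (k + 1) := by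
    apply pMul_injective p
    rw [map_add]
    linear_combination g1
  have e2 : 4 * u = v + -3 * ∑ k ∈ range (p - 1), (-3⁻¹ : ZMod p) ^ (k + 1) / (k + 1) := by
    apply pMul_injective p
    rw [map_add, ← map_ofNat (reduceSq p) 4, ← mul_pMul]
    linear_combination g2 - pMul_mul_pMul p u u
  rw [← hT]
  linear_combination e1 + e2

end ZMod

section CentralBinomial

open ZMod

variable {p m : ℕ} [Fact p.Prime]

theorem centralBinom_mul_neg_two_pow_eq (hm : 2 * m + 1 = p) {k : ℕ} (hk : k < p) :
    ((2 * k).choose k : ZMod (p ^ 2)) * (-2) ^ k =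
      (m.choose k + m * ((m + p).choose k - m.choose k)) * 8 ^ k := by
  have hx : 2 * ((m : ZMod (p ^ 2)) + m * p) + 1 = 0 := by
    have hm' : ((2 * m + 1 : ℕ) : ZMod (p ^ 2)) = p := congrArg _ hm
    push_cast at hm'
    linear_combination (1 + (p : ZMod (p ^ 2))) * hm' + natCast_self_sq p
  apply (isUnit_factorial hk).mul_left_cancel
  rw [← mul_assoc, factorial_mul_centralBinom_mul_neg_two_pow hx,
    (descPochhammer _ k).eval_add_mul_of_sq_eq_zero _ _ _ (natCast_self_sq p), ← Nat.cast_add,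
    ← factorial_mul_choose_eq_descPochhammer_eval,
    ← factorial_mul_choose_eq_descPochhammer_eval]
  ring

theorem sum_centralBinom_mul_neg_two_pow_eq_add (hm : 2 * m + 1 = p) :
    ∑ k ∈ range p, ((2 * k).choose k : ZMod (p ^ 2)) * (-2) ^ k =
      9 ^ m + m * (∑ k ∈ range p, ((m + p).choose k : ZMod (p ^ 2)) * 8 ^ k - 9 ^ m) := by
  have h9 : ∑ k ∈ range p, (m.choose k : ZMod (p ^ 2)) * 8 ^ k = 9 ^ m := by
    rw [sum_range_choose_mul_pow_of_lt _ (by omega : m < p)]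
    norm_num
  rw [sum_congr rfl fun k hk => centralBinom_mul_neg_two_pow_eq hm (mem_range.1 hk), ← h9,
    mul_sub, mul_sum, mul_sum, ← sum_sub_distrib, ← sum_add_distrib]
  exact sum_congr rfl fun k _ => by ring

theorem sum_choose_add_prime_mul_eight_pow (hm : 2 * m + 1 = p) (h3 : (3 : ZMod p) ≠ 0) :
    ∑ k ∈ range p, ((m + p).choose k : ZMod (p ^ 2)) * 8 ^ k =
      9 ^ (p + m) - 8 ^ p *
        (9 ^ m + pMul p (∑ l ∈ range m, (9⁻¹ : ZMod p) ^ (l + 1) / (l + 1))) := by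
  have h9 : (9 : ZMod p) ≠ 0 := by
    rw [show (9 : ZMod p) = 3 * 3 by norm_num]
    exact mul_ne_zero h3 h3
  have h9m : (9 : ZMod p) ^ m = 1 := by
    rw [show (9 : ZMod p) = 3 ^ 2 by norm_num, ← pow_mul, show 2 * m = p - 1 by omega,
      pow_card_sub_one_eq_one h3]
  have hterm : ∀ i ∈ range m, (9 : ZMod (p ^ 2)) ^ (m + 1 - 1 - (i + 1)) *
      ((p - 1 + (i + 1)).choose (p - 1) : ZMod (p ^ 2)) =
        pMul p ((9⁻¹ : ZMod p) ^ (i + 1) / (i + 1)) := fun i hi => by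
    rw [mem_range] at hi
    rw [show p - 1 + (i + 1) = p + i by omega, choose_add_prime_eq_pMul (by omega), mul_pMul,
      map_pow, map_ofNat, Nat.add_sub_cancel, pow_sub₀ _ h9 (by omega), h9m, inv_pow]
    congr 1
    ring
  have h := sum_range_choose_add_mul_pow (8 : ZMod (p ^ 2)) (p - 1) (p - 1) (m + 1)
  rw [Nat.sub_add_cancel (Fact.out : p.Prime).one_le, show p - 1 + (m + 1) = m + p by omega,
    sum_range_choose_mul_pow_of_lt _ (by omega : p - 1 < p),
    show (1 : ZMod (p ^ 2)) + 8 = 9 by norm_num, sum_range_succ', sum_congr rfl hterm,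
    ← map_sum] at h
  rw [h]
  simp only [Nat.add_sub_cancel, Nat.sub_zero, add_zero, Nat.choose_self, Nat.cast_one, mul_one]
  rw [← pow_add, show m + 1 + (p - 1) = p + m by omega]
  ring

end CentralBinomial

section FermatQuotient

open ZMod

variable {p : ℕ} [Fact p.Prime] {u v : ZMod p}

theorem nine_pow_eq_one_add_pMul {m : ℕ} (hm : 2 * m + 1 = p)
    (hv : (3 : ZMod (p ^ 2)) ^ p = 3 + pMul p v) {y : ZMod (p ^ 2)} (hy : 3 * y = 1) :
    (9 : ZMod (p ^ 2)) ^ m = 1 + pMul p (reduceSq p y * v) := by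
  have h93 : (9 : ZMod (p ^ 2)) ^ m * 3 = 3 ^ p := by
    rw [show (9 : ZMod (p ^ 2)) = 3 ^ 2 by norm_num, ← pow_mul, ← pow_succ, hm]
  calc (9 : ZMod (p ^ 2)) ^ m = 9 ^ m * 3 * y := by rw [mul_assoc, hy, mul_one]
    _ = y * 3 ^ p := by rw [h93, mul_comm]
    _ = 1 + pMul p (reduceSq p y * v) := by rw [hv, mul_add, mul_pMul, mul_comm y, hy]

theorem nine_pow_sub_eight_pow_sub_one_eq (hu : (2 : ZMod (p ^ 2)) ^ p = 2 + pMul p u)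
    (hv : (3 : ZMod (p ^ 2)) ^ p = 3 + pMul p v) :
    (9 : ZMod (p ^ 2)) ^ p - 8 ^ p - 1 = pMul p (6 * v - 12 * u) := by
  rw [show (9 : ZMod (p ^ 2)) = 3 ^ 2 by norm_num, show (8 : ZMod (p ^ 2)) = 2 ^ 3 by norm_num,
    ← pow_mul, ← pow_mul, mul_comm 2, mul_comm 3, pow_mul, pow_mul, hu, hv, map_sub,
    ← map_ofNat (reduceSq p) 6, ← map_ofNat (reduceSq p) 12, ← mul_pMul, ← mul_pMul]
  linear_combination pMul_mul_pMul p v v - 6 * pMul_mul_pMul p u u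
    - pMul p u * pMul_mul_pMul p u u

theorem four_mul_two_pow_pred_sub_one_eq (hu : (2 : ZMod (p ^ 2)) ^ p = 2 + pMul p u)
    (y : ZMod (p ^ 2)) :
    4 * y * (2 ^ (p - 1) - 1) = pMul p (2 * reduceSq p y * u) := by
  have h22 : (2 : ZMod (p ^ 2)) * 2 ^ (p - 1) = 2 ^ p := by
    rw [← pow_succ', Nat.sub_add_cancel (Fact.out : p.Prime).one_le]
  calc 4 * y * (2 ^ (p - 1) - 1) = 2 * y * (2 * 2 ^ (p - 1) - 2) := by ring
    _ = pMul p (2 * reduceSq p y * u) := by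
      rw [h22, hu, add_sub_cancel_left, mul_pMul, map_mul (reduceSq p), map_ofNat]

end FermatQuotient

open ZMod in
theorem sum_centralBinom_mul_neg_two_pow_eq {p : ℕ} [Fact p.Prime] (hp3 : 3 < p)
    {y : ZMod (p ^ 2)} (hy : 3 * y = 1) :
    ∑ k ∈ range p, ((2 * k).choose k : ZMod (p ^ 2)) * (-2) ^ k =
      1 - 4 * y * (2 ^ (p - 1) - 1) := by
  obtain ⟨m, hm⟩ := (Fact.out : p.Prime).odd_of_ne_two (by omega)
  replace hm := hm.symm
  have h3 : (3 : ZMod p) ≠ 0 := by exact_mod_cast natCast_ne_zero_of_pos_of_lt p three_pos hp3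
  obtain ⟨u, hu⟩ := exists_pMul_of_reduceSq_eq_zero p (x := (2 : ZMod (p ^ 2)) ^ p - 2)
    (by simp [ZMod.pow_card])
  obtain ⟨v, hv⟩ := exists_pMul_of_reduceSq_eq_zero p (x := (3 : ZMod (p ^ 2)) ^ p - 3)
    (by simp [ZMod.pow_card])
  rw [sub_eq_iff_eq_add'] at hu hv
  have hH := three_mul_sum_inv_nine_pow_div hm h3 hu hv
  set H := ∑ l ∈ range m, (9⁻¹ : ZMod p) ^ (l + 1) / (l + 1)
  set z := reduceSq p y
  have hz : 3 * z = 1 := by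
    simpa only [map_mul, map_ofNat, map_one] using congrArg (reduceSq p) hy
  have hm' : 2 * (m : ZMod p) + 1 = 0 := by
    exact_mod_cast (congrArg (Nat.cast : ℕ → ZMod p) hm).trans (natCast_self p)
  have h8H : (8 : ZMod (p ^ 2)) ^ p * pMul p H = pMul p (8 * H) := by
    rw [mul_pMul, map_pow, map_ofNat, ZMod.pow_card]
  rw [sum_centralBinom_mul_neg_two_pow_eq_add hm, sum_choose_add_prime_mul_eight_pow hm h3,
    four_mul_two_pow_pred_sub_one_eq hu]
  calc 9 ^ m + m * (9 ^ (p + m) - 8 ^ p * (9 ^ m + pMul p H) - 9 ^ m)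
      = 9 ^ m + m * (9 ^ m * (9 ^ p - 8 ^ p - 1) - 8 ^ p * pMul p H) := by ring
    _ = 1 + pMul p (z * v + m * (6 * v - 12 * u) - m * (8 * H)) := by
      rw [nine_pow_eq_one_add_pMul hm hv hy, nine_pow_sub_eight_pow_sub_one_eq hu hv, h8H,
        add_mul, one_mul, pMul_mul_pMul, add_zero, mul_sub, mul_pMul, mul_pMul, map_natCast,
        map_sub, map_add]
      ring
    _ = 1 - pMul p (2 * z * u) := by
      rw [sub_eq_add_neg (1 : ZMod (p ^ 2)), ← map_neg]
      congr 2
      linear_combination z * (v + 2 * u) * hm' - 8 * m * z * hH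
        + (8 * m * H - m * (6 * v - 12 * u)) * hz

theorem central_binom_neg_two_sum (p : ℕ) (hp : p.Prime) (hp3 : 3 < p)
    (y : ℤ) (hy : 3 * y ≡ 1 [ZMOD (p : ℤ) ^ 2]) :
    ∑ k ∈ range p, ((2 * k).choose k : ℤ) * (-2 : ℤ) ^ k ≡
      1 - 4 * y * (2 ^ (p - 1) - 1) [ZMOD (p : ℤ) ^ 2] := by
  have := Fact.mk hp
  rw [← Nat.cast_pow, ← ZMod.intCast_eq_intCast_iff] at hy ⊢
  push_cast at hy ⊢
  exact sum_centralBinom_mul_neg_two_pow_eq hp3 hy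
end

section
/- For every nonnegative integer m and every rational (or real) x not equal to 0, -1, -2, …, -m, the identity ∑_{k=0}^{m} C(m,k) C(m+k,k) (-1)^{m-k} / (x+k) = (1/x) ∏_{k=1}^{m} (x-k)/(x+k) holds. -/
open Finset Polynomial Lagrange
open scoped Nat

/-!
With `P = ∏_{j=1}^m (X - j)` and nodal polynomial `Q = ∏_{k=0}^m (X + k)`, the right-hand side
is `P(x) / Q(x)`. Since `deg P < deg Q` and `Q` has the simple roots `-k`, Lagrange interpolation
of `P` at these nodes gives the partial fraction decomposition `P/Q = ∑ₖ w_k P(-k) / (x + k)` with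
barycentric weights `w_k = ∏_{j ≠ k} (j - k)⁻¹ = ((-1)^k k! (m-k)!)⁻¹`. As
`P(-k) = (-1)^m (m+k)!/k!`, the coefficient is `(-1)^(m-k) (m+k)! / (k!² (m-k)!)`, which is
`(-1)^(m-k) C(m,k) C(m+k,k)`.
-/

namespace Lagrange

variable {F ι : Type*} [Field F] [DecidableEq ι] {s : Finset ι} {v : ι → F} {f : F[X]} {x : F}

theorem eval_div_eval_nodal_eq_sum (hvs : Set.InjOn v s) (hf : f.degree < #s)
    (hx : ∀ i ∈ s, x ≠ v i) :
    f.eval x / (nodal s v).eval x = ∑ i ∈ s, nodalWeight s v i * f.eval (v i) / (x - v i) := by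
  calc f.eval x / (nodal s v).eval x
      = (interpolate s v fun i => f.eval (v i)).eval x / (nodal s v).eval x := by
        rw [← eq_interpolate hvs hf]
    _ = _ := by
        rw [eval_interpolate_not_at_node _ hx, mul_div_cancel_left₀ _ (eval_nodal_not_at_node hx)]
        simp only [div_eq_mul_inv, mul_right_comm]

end Lagrange

theorem prod_Icc_natCast_add {R : Type*} [CommSemiring R] (k m : ℕ) :
    k ! * ∏ j ∈ Icc 1 m, ((k : R) + j) = (m + k)! := by
  rw [add_comm m, ← Nat.factorial_mul_ascFactorial, Nat.ascFactorial_eq_prod_range,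
    ← Ico_add_one_right_eq_Icc, prod_Ico_eq_prod_range]
  push_cast
  simp only [add_assoc]

theorem prod_range_natCast_sub_self {R : Type*} [CommRing R] (n : ℕ) :
    ∏ j ∈ range n, ((j : R) - n) = (-1) ^ n * n ! := by
  have hfactorial := descPochhammer_eval_eq_prod_range (R := R) n n
  rw [descPochhammer_eval_eq_descFactorial, Nat.descFactorial_self] at hfactorial
  calc ∏ j ∈ range n, ((j : R) - n) = ∏ j ∈ range n, -((n : R) - j) :=
        prod_congr rfl fun _ _ => (neg_sub _ _).symm
    _ = (-1) ^ n * n ! := by rw [prod_neg, card_range, hfactorial]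

theorem prod_Ico_natCast_sub {R : Type*} [CommRing R] (k m : ℕ) :
    ∏ j ∈ Ico (k + 1) (m + 1), ((j : R) - k) = (m - k)! := by
  rw [prod_Ico_eq_prod_range, show m + 1 - (k + 1) = m - k by omega,
    ← prod_range_add_one_eq_factorial]
  push_cast
  exact prod_congr rfl fun _ _ => by ring

theorem prod_range_erase_natCast_sub {R : Type*} [CommRing R] {k m : ℕ} (hk : k ≤ m) :
    ∏ j ∈ (range (m + 1)).erase k, ((j : R) - k) = (-1) ^ k * k ! * (m - k)! := by
  have hsplit : (range (m + 1)).erase k = range k ∪ Ico (k + 1) (m + 1) := by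
    ext j; simp only [mem_erase, mem_range, mem_union, mem_Ico]; omega
  have hdisj : Disjoint (range k) (Ico (k + 1) (m + 1)) :=
    disjoint_left.2 fun j h₁ h₂ => by simp only [mem_range, mem_Ico] at h₁ h₂; omega
  rw [hsplit, prod_union hdisj, prod_range_natCast_sub_self, prod_Ico_natCast_sub]

theorem choose_mul_add_choose_mul_factorial {k m : ℕ} (hk : k ≤ m) :
    m.choose k * (m + k).choose k * (k ! * (k ! * (m - k)!)) = (m + k)! :=
  calc m.choose k * (m + k).choose k * (k ! * (k ! * (m - k)!))
      = (m + k).choose k * (m.choose k * k ! * (m - k)!) * k ! := by ring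
    _ = (m + k)! := by
      rw [Nat.choose_mul_factorial_mul_factorial hk, Nat.add_choose_mul_factorial_mul_factorial]

theorem nodalWeight_mul_eval_nodal {K : Type*} [Field K] [CharZero K] {k m : ℕ} (hk : k ≤ m) :
    nodalWeight (range (m + 1)) (fun j : ℕ => -(j : K)) k *
        (nodal (Icc 1 m) (fun j : ℕ => (j : K))).eval (-(k : K)) =
      m.choose k * (m + k).choose k * (-1) ^ (m - k) := by
  have hweight : nodalWeight (range (m + 1)) (fun j : ℕ => -(j : K)) k =
      ((-1) ^ k * k ! * ((m - k)! : K))⁻¹ := by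
    simp only [nodalWeight, neg_sub_neg, prod_inv_distrib, prod_range_erase_natCast_sub hk]
  have hvalue : (nodal (Icc 1 m) (fun j : ℕ => (j : K))).eval (-(k : K)) =
      (-1) ^ m * ∏ j ∈ Icc 1 m, ((k : K) + j) := by
    rw [eval_nodal]
    calc ∏ j ∈ Icc 1 m, (-(k : K) - j) = ∏ j ∈ Icc 1 m, -((k : K) + j) :=
          prod_congr rfl fun _ _ => by ring
      _ = _ := by rw [prod_neg, Nat.card_Icc, Nat.add_sub_cancel]
  have hfac : (k ! : K) ≠ 0 := Nat.cast_ne_zero.2 k.factorial_ne_zero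
  have hfac' : ((m - k)! : K) ≠ 0 := Nat.cast_ne_zero.2 (m - k).factorial_ne_zero
  have hsign : ((-1 : K) ^ m) = (-1) ^ (m - k) * (-1) ^ k := by
    rw [← pow_add, Nat.sub_add_cancel hk]
  have hfactorials : (m.choose k : K) * (m + k).choose k * (k ! * (k ! * (m - k)!)) =
      k ! * ∏ j ∈ Icc 1 m, ((k : K) + j) := by
    rw [prod_Icc_natCast_add]
    exact_mod_cast choose_mul_add_choose_mul_factorial hk
  rw [hweight, hvalue, hsign]
  field_simp
  apply mul_left_cancel₀ hfac
  linear_combination -hfactorials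

theorem partial_fraction_identity (m : ℕ) (x : ℚ)
    (hx : ∀ k : ℕ, k ≤ m → x + k ≠ 0) :
    ∑ k ∈ range (m + 1),
        (m.choose k : ℚ) * ((m + k).choose k : ℚ) * (-1 : ℚ) ^ (m - k) / (x + k) =
      (1 / x) * ∏ k ∈ Icc 1 m, (x - k) / (x + k) := by
  have hnodes : Set.InjOn (fun j : ℕ => -(j : ℚ)) (range (m + 1)) :=
    (neg_injective.comp Nat.cast_injective).injOn
  have hx_nodes : ∀ k ∈ range (m + 1), x ≠ -(k : ℚ) := fun k hk =>
    (hx k (Nat.lt_succ_iff.mp (mem_range.mp hk))) ∘ eq_neg_iff_add_eq_zero.mp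
  have hdeg : (nodal (Icc 1 m) (fun j : ℕ => (j : ℚ))).degree < #(range (m + 1)) := by
    rw [degree_nodal, Nat.card_Icc, card_range, Nat.add_sub_cancel]
    exact_mod_cast m.lt_succ_self
  have hdenom : ∏ k ∈ range (m + 1), (x - -(k : ℚ)) = x * ∏ k ∈ Icc 1 m, (x + k) := by
    rw [range_eq_Ico, Ico_add_one_right_eq_Icc, ← insert_Icc_add_one_left_eq_Icc m.zero_le,
      prod_insert (by simp)]
    simp
  calc ∑ k ∈ range (m + 1),
        (m.choose k : ℚ) * ((m + k).choose k : ℚ) * (-1 : ℚ) ^ (m - k) / (x + k)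
      = ∑ k ∈ range (m + 1), nodalWeight (range (m + 1)) (fun j : ℕ => -(j : ℚ)) k *
          (nodal (Icc 1 m) (fun j : ℕ => (j : ℚ))).eval (-(k : ℚ)) / (x - -(k : ℚ)) :=
        sum_congr rfl fun k hk => by
          rw [nodalWeight_mul_eval_nodal (Nat.lt_succ_iff.mp (mem_range.mp hk)), sub_neg_eq_add]
    _ = (∏ k ∈ Icc 1 m, (x - k)) / ∏ k ∈ range (m + 1), (x - -(k : ℚ)) := by
        rw [← eval_div_eval_nodal_eq_sum hnodes hdeg hx_nodes, eval_nodal, eval_nodal]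
    _ = (1 / x) * ∏ k ∈ Icc 1 m, (x - k) / (x + k) := by
        rw [hdenom, prod_div_distrib, one_div_mul_eq_div, div_div, mul_comm]
end

section
/- For every nonnegative integer m, ∑_{k=0}^{m} C(m,k) C(m+k,k) (-1)^{m-k} / (2m+2k+1) = (2m)!^3 / ((4m+1)! · (m!)^2). -/
/-!
Lagrange interpolation of `∏_{j=1}^m (x - j)` at the nodes `0, -1, …, -m` gives the partial
fraction decomposition
`∑_k C(m,k) C(m+k,k) (-1)^(m-k) / (x + k) = ∏_{j=1}^m (x - j) / ∏_{k=0}^m (x + k)`,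
the coefficient at `-k` being `(-1)^m (m+k)!/k!` divided by `(-1)^k k! (m-k)!`.
At `x = m + 1/2` both products become products of odd numbers, i.e. ratios of factorials.
-/

open Finset Polynomial Nat

theorem Lagrange.eval_eq_eval_nodal_mul_sum {F ι : Type*} [Field F] [DecidableEq ι]
    {s : Finset ι} {v : ι → F} (hvs : Set.InjOn v s) {p : F[X]} (hp : p.degree < #s) {x : F}
    (hx : ∀ i ∈ s, x ≠ v i) :
    p.eval x = (nodal s v).eval x * ∑ i ∈ s, nodalWeight s v i * (x - v i)⁻¹ * p.eval (v i) := by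
  conv_lhs => rw [eq_interpolate hvs hp]
  exact eval_interpolate_not_at_node _ hx

section CommRing

variable {R : Type*} [CommRing R]

theorem prod_erase_range_succ_sub {m k : ℕ} (hk : k ≤ m) :
    ∏ j ∈ (range (m + 1)).erase k, ((j : R) - k) = (-1) ^ k * k ! * (m - k)! := by
  have hsplit : (range (m + 1)).erase k = range k ∪ Ico (k + 1) (m + 1) := by
    ext j; simp only [mem_erase, mem_range, mem_union, mem_Ico]; omega
  have hbelow : ∏ j ∈ range k, ((j : R) - k) = (-1) ^ k * k ! := by
    calc ∏ j ∈ range k, ((j : R) - k) = ∏ j ∈ range k, (-1 * ((j : R) + 1)) := by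
          rw [← prod_range_reflect]
          refine prod_congr rfl fun j hj => ?_
          rw [Nat.sub_sub, Nat.cast_sub (by simp at hj; omega)]
          push_cast; ring
      _ = (-1) ^ k * k ! := by
          rw [prod_mul_distrib, prod_const, card_range, ← prod_range_add_one_eq_factorial]
          push_cast; rfl
  have habove : ∏ j ∈ Ico (k + 1) (m + 1), ((j : R) - k) = (m - k)! := by
    rw [prod_Ico_eq_prod_range, show m + 1 - (k + 1) = m - k by omega,
      ← prod_range_add_one_eq_factorial, Nat.cast_prod]
    refine prod_congr rfl fun j _ => ?_
    push_cast; ring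
  rw [hsplit, prod_union (disjoint_left.2 fun j hj hj' => by simp at hj hj'; omega), hbelow,
    habove]

theorem factorial_mul_prod_range_add {k : ℕ} (m : ℕ) :
    (k ! : R) * ∏ j ∈ range m, ((k : R) + j + 1) = (k + m)! := by
  rw [← Nat.factorial_mul_ascFactorial, Nat.ascFactorial_eq_prod_range]
  push_cast
  congr 1
  refine prod_congr rfl fun j _ => ?_
  ring

end CommRing

theorem Nat.choose_mul_choose_add_mul_factorial {m k : ℕ} (hk : k ≤ m) :
    m.choose k * (m + k).choose k * (k ! * k ! * (m - k)!) = (m + k)! := by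
  have h₁ := Nat.choose_mul_factorial_mul_factorial hk
  have h₂ := Nat.choose_mul_factorial_mul_factorial (Nat.le_add_left k m)
  rw [Nat.add_sub_cancel] at h₂
  apply Nat.eq_of_mul_eq_mul_right m.factorial_pos
  calc _ = (m.choose k * k ! * (m - k)!) * ((m + k).choose k * k ! * m !) := by ring
    _ = _ := by rw [h₁, h₂, mul_comm]

section Field

variable {K : Type*} [Field K] [CharZero K]

theorem nodalWeight_mul_eval_nodal_neg {m k : ℕ} (hk : k ≤ m) :
    Lagrange.nodalWeight (range (m + 1)) (fun i => -(i : K)) k *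
        (Lagrange.nodal (range m) fun j => (j : K) + 1).eval (-(k : K)) =
      m.choose k * (m + k).choose k * (-1) ^ (m - k) := by
  have hweight : ∏ j ∈ (range (m + 1)).erase k, (-(k : K) - -(j : K)) =
      (-1) ^ k * k ! * (m - k)! := by
    rw [← prod_erase_range_succ_sub hk]
    exact prod_congr rfl fun j _ => by ring
  have hvalue : ∏ j ∈ range m, (-(k : K) - ((j : K) + 1)) =
      (-1) ^ m * ∏ j ∈ range m, ((k : K) + j + 1) := by
    rw [← card_range m, ← prod_const, card_range, ← prod_mul_distrib]
    exact prod_congr rfl fun j _ => by ring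
  have hchoose : (m.choose k : K) * (m + k).choose k * (k ! * k ! * (m - k)!) = (m + k)! := by
    exact_mod_cast choose_mul_choose_add_mul_factorial hk
  have hfact := factorial_mul_prod_range_add (R := K) (k := k) m
  rw [add_comm k m] at hfact
  rw [Lagrange.nodalWeight, prod_inv_distrib, Lagrange.eval_nodal, hweight, hvalue,
    ← pow_sub_mul_pow (-1 : K) hk]
  field_simp
  have hk₀ : (k ! : K) ≠ 0 := Nat.cast_ne_zero.2 (factorial_ne_zero k)
  rw [div_eq_iff (mul_ne_zero hk₀ (Nat.cast_ne_zero.2 (factorial_ne_zero _)))]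
  apply mul_left_cancel₀ hk₀
  linear_combination hfact - hchoose

theorem sum_choose_mul_choose_div_add (m : ℕ) {x : K} (hx : ∀ k ≤ m, x + k ≠ 0) :
    ∑ k ∈ range (m + 1), (m.choose k : K) * (m + k).choose k * (-1) ^ (m - k) / (x + k) =
      (∏ j ∈ range m, (x - (j + 1))) / ∏ k ∈ range (m + 1), (x + k) := by
  have hinj : Set.InjOn (fun i : ℕ => -(i : K)) (range (m + 1)) :=
    fun a _ b _ h => by simpa using h
  have hdeg : (Lagrange.nodal (range m) fun j => (j : K) + 1).degree < #(range (m + 1)) := by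
    rw [Lagrange.degree_nodal, card_range, card_range]
    exact_mod_cast m.lt_succ_self
  have hx' : ∀ k ∈ range (m + 1), x ≠ -(k : K) := fun k hk h =>
    hx k (Nat.lt_succ_iff.1 (mem_range.1 hk)) (by rw [h, neg_add_cancel])
  have hD : ∏ k ∈ range (m + 1), (x + k) ≠ 0 :=
    prod_ne_zero_iff.2 fun k hk => hx k (Nat.lt_succ_iff.1 (mem_range.1 hk))
  have key := Lagrange.eval_eq_eval_nodal_mul_sum hinj hdeg hx'
  simp only [Lagrange.eval_nodal (v := fun i : ℕ => -(i : K)), sub_neg_eq_add] at key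
  rw [Lagrange.eval_nodal] at key
  rw [key, mul_div_cancel_left₀ _ hD]
  refine sum_congr rfl fun k hk => ?_
  rw [mul_right_comm _ (x + k)⁻¹,
    nodalWeight_mul_eval_nodal_neg (Nat.lt_succ_iff.1 (mem_range.1 hk)), div_eq_mul_inv]

theorem two_mul_add_one_ne_zero (n : ℕ) : (2 * n + 1 : K) ≠ 0 := by
  exact_mod_cast (2 * n).succ_ne_zero

theorem two_pow_mul_prod_range_half_sub (m : ℕ) :
    2 ^ m * ∏ j ∈ range m, ((2 * m + 1 : K) / 2 - (j + 1)) = ∏ i ∈ range m, (2 * i + 1 : K) := by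
  rw [← prod_range_reflect, ← card_range m, ← prod_const, card_range, ← prod_mul_distrib]
  refine prod_congr rfl fun j hj => ?_
  rw [Nat.sub_sub, Nat.cast_sub (by simp at hj; omega)]
  push_cast
  field_simp
  ring

theorem two_pow_mul_prod_range_half_add (m : ℕ) :
    2 ^ (m + 1) * ∏ k ∈ range (m + 1), ((2 * m + 1 : K) / 2 + k) =
      ∏ k ∈ range (m + 1), (2 * (m + k : ℕ) + 1 : K) := by
  rw [← card_range (m + 1), ← prod_const, card_range, ← prod_mul_distrib]
  refine prod_congr rfl fun k _ => ?_
  push_cast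
  field_simp
  ring

theorem sum_choose_mul_choose_div_two_mul_add_one (m : ℕ) :
    ∑ k ∈ range (m + 1), (m.choose k : K) * (m + k).choose k * (-1) ^ (m - k) /
        (2 * m + 2 * k + 1) =
      (∏ i ∈ range m, (2 * i + 1 : K)) ^ 2 / ∏ i ∈ range (2 * m + 1), (2 * i + 1 : K) := by
  have hx : ∀ k ≤ m, (2 * m + 1 : K) / 2 + k ≠ 0 := fun k _ => by
    have := two_mul_add_one_ne_zero (K := K) (m + k)
    contrapose! this
    push_cast
    linear_combination 2 * this
  have hhalf : ∀ k ∈ range (m + 1),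
      (m.choose k : K) * (m + k).choose k * (-1) ^ (m - k) / (2 * m + 2 * k + 1) =
        2⁻¹ * ((m.choose k : K) * (m + k).choose k * (-1) ^ (m - k) /
          ((2 * m + 1 : K) / 2 + k)) := fun k _ => by
    field_simp
    ring
  have hsplit := prod_range_add (fun i => (2 * i + 1 : K)) m (m + 1)
  rw [sum_congr rfl hhalf, ← mul_sum, sum_choose_mul_choose_div_add m hx,
    show 2 * m + 1 = m + (m + 1) by ring, hsplit, ← two_pow_mul_prod_range_half_sub,
    ← two_pow_mul_prod_range_half_add]
  field_simp
  ring

theorem prod_range_two_mul_add_one (n : ℕ) :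
    ∏ i ∈ range n, (2 * i + 1 : K) = (2 * n)! / (2 ^ n * n !) := by
  induction n with
  | zero => simp
  | succ n ih =>
    rw [prod_range_succ, ih, show 2 * (n + 1) = 2 * n + 1 + 1 by ring, factorial_succ,
      factorial_succ, factorial_succ]
    push_cast
    field_simp
    ring

end Field

theorem mortenson_identity (m : ℕ) :
    ∑ k ∈ range (m + 1),
        (m.choose k : ℚ) * ((m + k).choose k : ℚ) * (-1 : ℚ) ^ (m - k) /
          (2 * m + 2 * k + 1) =
      ((2 * m).factorial : ℚ) ^ 3 /
        (((4 * m + 1).factorial : ℚ) * (m.factorial : ℚ) ^ 2) := by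
  rw [sum_choose_mul_choose_div_two_mul_add_one, prod_range_two_mul_add_one,
    prod_range_two_mul_add_one, show 2 * (2 * m + 1) = 4 * m + 1 + 1 by ring, factorial_succ,
    factorial_succ (2 * m)]
  push_cast
  field_simp
  ring
end

section
/- For all nonnegative integers m, k and positive integer p with m ≤ p-1 and k ≤ m, ∑_{ℓ=m}^{p-1} C(ℓ, m+k) C(ℓ+m+k, m+k) = C(2m+2k, m+k) C(p+m+k, 2m+2k+1). -/
/-! Since `C(ℓ, n) C(ℓ + n, n) = C(2n, n) C(ℓ + n, 2n)` (both sides count pairs of disjoint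
`n`-subsets of an `(ℓ + n)`-set), the sum reduces to the hockey-stick identity
`∑_{ℓ < p} C(ℓ + n, 2n) = C(p + n, 2n + 1)`, with `n = m + k`. Terms with `ℓ < m` vanish, so the
sum may start at `m`. -/

open Finset

namespace Nat

theorem choose_mul_add_choose_self (q n : ℕ) :
    q.choose n * (q + n).choose n = (2 * n).choose n * (q + n).choose (2 * n) := by
  have h := choose_mul (n := q + n) (k := 2 * n) (s := n) (by omega)
  rw [Nat.add_sub_cancel, show 2 * n - n = n by omega] at h
  rw [mul_comm, ← h, mul_comm]

theorem sum_range_add_choose_of_le {n k : ℕ} (h : n ≤ k) (q : ℕ) :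
    ∑ i ∈ range q, (i + n).choose k = (q + n).choose (k + 1) := by
  induction q with
  | zero => simp [choose_eq_zero_of_lt (Nat.lt_succ_of_le h)]
  | succ q ih => rw [sum_range_succ, ih, add_right_comm, choose_succ_succ', add_comm]

theorem sum_range_choose_mul_add_choose (q n : ℕ) :
    ∑ ℓ ∈ range q, ℓ.choose n * (ℓ + n).choose n =
      (2 * n).choose n * (q + n).choose (2 * n + 1) := by
  simp_rw [choose_mul_add_choose_self, ← mul_sum]
  rw [sum_range_add_choose_of_le (by omega)]

theorem sum_Ico_choose_mul_add_choose {m n : ℕ} (hmn : m ≤ n) (q : ℕ) :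
    ∑ ℓ ∈ Ico m q, ℓ.choose n * (ℓ + n).choose n =
      (2 * n).choose n * (q + n).choose (2 * n + 1) := by
  rw [← sum_range_choose_mul_add_choose]
  refine sum_subset (fun ℓ hℓ => mem_range.2 (mem_Ico.1 hℓ).2) fun ℓ hℓq hℓ => ?_
  have hℓm : ℓ < m := by simp_all
  rw [choose_eq_zero_of_lt (by omega), zero_mul]

end Nat

theorem binom_sum_identity_general (p m k : ℕ) (hp : 0 < p) :
    ∑ ℓ ∈ Icc m (p - 1), ℓ.choose (m + k) * (ℓ + m + k).choose (m + k) =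
      (2 * m + 2 * k).choose (m + k) * (p + m + k).choose (2 * m + 2 * k + 1) := by
  have hIcc : Icc m (p - 1) = Ico m p := by
    rw [← Ico_add_one_right_eq_Icc, Nat.sub_one_add_one hp.ne']
  rw [hIcc, ← mul_add]
  simp_rw [add_assoc]
  exact Nat.sum_Ico_choose_mul_add_choose (Nat.le_add_right m k) p

theorem binom_sum_identity (p m k : ℕ) (hp : 0 < p) (hm : m ≤ p - 1) (hk : k ≤ m) :
    ∑ ℓ ∈ Icc m (p - 1), ℓ.choose (m + k) * (ℓ + m + k).choose (m + k) =
      (2 * m + 2 * k).choose (m + k) * (p + m + k).choose (2 * m + 2 * k + 1) :=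
  binom_sum_identity_general p m k hp
end

section
/- Let p > 3 be a prime and let m, k be nonnegative integers with m + k ≤ p - 1. Then C(2m+2k, m+k) · C(p+m+k, 2m+2k+1) ≡ (-1)^{m+k} · p / (2m+2k+1) (mod p^2), where division by 2m+2k+1 is interpreted via its inverse modulo p^2 when p does not divide 2m+2k+1, and when p divides 2m+2k+1 the statement is C(2m+2k,m+k)·C(p+m+k,2m+2k+1)·(2m+2k+1) ≡ (-1)^{m+k} p (mod p^3). -/
/-!
With `n = m + k`, the identity `C(2n,n) C(p+n,2n+1) (2n+1) = p C(p+n,n) C(p-1,n)` reduces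
everything to `C(p+n,n) C(p-1,n) ≡ (-1)^n (mod p²)`. Multiplied by `(n!)²`, the left side is
`∏_{j=1}^n (p+j)(p-j) = ∏ (p² - j²) ≡ ∏ (-j²) = (-1)^n (n!)²`, and `n!` is a unit mod `p²`
because `n < p`.
-/

open Finset Nat

theorem Int.ModEq.cancel_left_of_isCoprime {m a b c : ℤ} (hmc : IsCoprime m c)
    (h : c * a ≡ c * b [ZMOD m]) : a ≡ b [ZMOD m] := by
  rw [Int.modEq_iff_dvd, ← mul_sub] at h
  exact Int.modEq_iff_dvd.2 (hmc.dvd_of_dvd_mul_left h)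

theorem prod_add_mul_sub_modEq (x : ℤ) (n : ℕ) :
    ∏ i ∈ range n, (x + (i + 1)) * (x - (i + 1)) ≡ (-1) ^ n * (n ! : ℤ) ^ 2 [ZMOD x ^ 2] := by
  have hx : x ^ 2 ≡ 0 [ZMOD x ^ 2] := Int.modEq_zero_iff_dvd.2 dvd_rfl
  calc ∏ i ∈ range n, (x + (i + 1)) * (x - (i + 1))
      = ∏ i ∈ range n, (x ^ 2 + -((i : ℤ) + 1) ^ 2) :=
        prod_congr rfl fun _ _ => by ring
    _ ≡ ∏ i ∈ range n, (0 + -((i : ℤ) + 1) ^ 2) [ZMOD x ^ 2] :=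
        Int.ModEq.prod fun i _ => hx.add_right _
    _ = (-1) ^ n * (n ! : ℤ) ^ 2 := by
        simp only [zero_add, prod_neg, card_range, prod_pow, ← prod_range_add_one_eq_factorial]
        push_cast
        rfl

theorem factorial_sq_mul_choose_add_mul_choose_sub_one {p n : ℕ} (hn : n ≤ p) :
    (n ! : ℤ) ^ 2 * ((p + n).choose n * (p - 1).choose n) =
      ∏ i ∈ range n, ((p : ℤ) + (i + 1)) * (p - (i + 1)) := by
  have hasc : (n ! * (p + n).choose n : ℤ) = ∏ i ∈ range n, ((p : ℤ) + (i + 1)) := by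
    rw [← Nat.cast_mul, ← ascFactorial_eq_factorial_mul_choose, ascFactorial_eq_prod_range]
    push_cast
    exact prod_congr rfl fun i _ => by ring
  have hdesc : (n ! * (p - 1).choose n : ℤ) = ∏ i ∈ range n, ((p : ℤ) - (i + 1)) := by
    rw [← Nat.cast_mul, ← descFactorial_eq_factorial_mul_choose, descFactorial_eq_prod_range,
      Nat.cast_prod]
    refine prod_congr rfl fun i hi => ?_
    have : i < n := mem_range.1 hi
    rw [Nat.sub_sub, Nat.cast_sub (by omega)]
    push_cast
    ring
  rw [prod_mul_distrib, ← hasc, ← hdesc]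
  ring

theorem choose_add_mul_choose_sub_one_modEq {p n : ℕ} (hp : p.Prime) (hn : n < p) :
    ((p + n).choose n * (p - 1).choose n : ℤ) ≡ (-1) ^ n [ZMOD p ^ 2] := by
  have hcop : IsCoprime ((p : ℤ) ^ 2) ((n ! : ℤ) ^ 2) :=
    (Nat.isCoprime_iff_coprime.2 <|
      (hp.coprime_iff_not_dvd.2 fun hd => by have := hp.dvd_factorial.1 hd; omega)).pow
  refine Int.ModEq.cancel_left_of_isCoprime hcop ?_
  rw [factorial_sq_mul_choose_add_mul_choose_sub_one hn.le, mul_comm]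
  exact prod_add_mul_sub_modEq p n

theorem choose_two_mul_mul_choose_mul_eq (p n : ℕ) :
    (2 * n).choose n * (p + n).choose (2 * n + 1) * (2 * n + 1) =
      p * ((p + n).choose n * (p - 1).choose n) := by
  rcases p with _ | p
  · simp [choose_eq_zero_of_lt (by omega : n < 2 * n + 1)]
  calc (2 * n).choose n * (p + 1 + n).choose (2 * n + 1) * (2 * n + 1)
      = (p + 1 + n).choose (2 * n + 1) * (2 * n + 1).choose n * (n + 1) := by
        have h := add_one_mul_choose_eq (2 * n) n
        rw [choose_symm_half] at h
        rw [mul_assoc _ _ (n + 1), ← h]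
        ring
    _ = (p + 1 + n).choose n * ((p + 1).choose (n + 1) * (n + 1)) := by
        rw [choose_mul (by omega), show p + 1 + n - n = p + 1 by omega,
          show 2 * n + 1 - n = n + 1 by omega]
        ring
    _ = (p + 1) * ((p + 1 + n).choose n * (p + 1 - 1).choose n) := by
        rw [← add_one_mul_choose_eq, Nat.add_sub_cancel]
        ring

theorem choose_two_mul_mul_choose_mul_modEq {p n : ℕ} (hp : p.Prime) (hn : n < p) :
    ((2 * n).choose n * (p + n).choose (2 * n + 1) * (2 * n + 1) : ℤ) ≡
      (-1) ^ n * p [ZMOD p ^ 3] := by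
  have hid : ((2 * n).choose n * (p + n).choose (2 * n + 1) * (2 * n + 1) : ℤ) =
      p * ((p + n).choose n * (p - 1).choose n) := by
    exact_mod_cast choose_two_mul_mul_choose_mul_eq p n
  have h := (choose_add_mul_choose_sub_one_modEq hp hn).mul_left' (c := (p : ℤ))
  rw [show (p : ℤ) * p ^ 2 = p ^ 3 by ring] at h
  rwa [hid, mul_comm _ (p : ℤ)]

theorem binom_product_congruence_general (p : ℕ) (hp : p.Prime)
    (m k : ℕ) (h : m + k ≤ p - 1) :
    (∀ y : ℤ, ¬ (p : ℤ) ∣ (2 * m + 2 * k + 1) →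
        (2 * m + 2 * k + 1 : ℤ) * y ≡ 1 [ZMOD (p : ℤ) ^ 2] →
        ((2 * m + 2 * k).choose (m + k) : ℤ) *
            ((p + m + k).choose (2 * m + 2 * k + 1) : ℤ) ≡
          (-1 : ℤ) ^ (m + k) * p * y [ZMOD (p : ℤ) ^ 2]) ∧
    ((p : ℤ) ∣ (2 * m + 2 * k + 1) →
        ((2 * m + 2 * k).choose (m + k) : ℤ) *
            ((p + m + k).choose (2 * m + 2 * k + 1) : ℤ) * (2 * m + 2 * k + 1) ≡
          (-1 : ℤ) ^ (m + k) * p [ZMOD (p : ℤ) ^ 3]) := by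
  have key := choose_two_mul_mul_choose_mul_modEq hp (n := m + k) (by have := hp.pos; omega)
  rw [show 2 * (m + k) = 2 * m + 2 * k by ring, ← add_assoc,
    show 2 * ((m + k : ℕ) : ℤ) + 1 = 2 * m + 2 * k + 1 by push_cast; ring] at key
  refine ⟨fun y _ hy => ?_, fun _ => key⟩
  set C := ((2 * m + 2 * k).choose (m + k) : ℤ) * ((p + m + k).choose (2 * m + 2 * k + 1) : ℤ)
  calc C = C * 1 := (mul_one C).symm
    _ ≡ C * ((2 * m + 2 * k + 1) * y) [ZMOD (p : ℤ) ^ 2] := (hy.mul_left C).symm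
    _ = C * (2 * m + 2 * k + 1) * y := by ring
    _ ≡ (-1) ^ (m + k) * p * y [ZMOD (p : ℤ) ^ 2] :=
        (key.of_dvd (pow_dvd_pow _ (by norm_num : 2 ≤ 3))).mul_right y

theorem binom_product_congruence (p : ℕ) (hp : p.Prime) (hp3 : 3 < p)
    (m k : ℕ) (h : m + k ≤ p - 1) :
    (∀ y : ℤ, ¬ (p : ℤ) ∣ (2 * m + 2 * k + 1) →
        (2 * m + 2 * k + 1 : ℤ) * y ≡ 1 [ZMOD (p : ℤ) ^ 2] →
        ((2 * m + 2 * k).choose (m + k) : ℤ) *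
            ((p + m + k).choose (2 * m + 2 * k + 1) : ℤ) ≡
          (-1 : ℤ) ^ (m + k) * p * y [ZMOD (p : ℤ) ^ 2]) ∧
    ((p : ℤ) ∣ (2 * m + 2 * k + 1) →
        ((2 * m + 2 * k).choose (m + k) : ℤ) *
            ((p + m + k).choose (2 * m + 2 * k + 1) : ℤ) * (2 * m + 2 * k + 1) ≡
          (-1 : ℤ) ^ (m + k) * p [ZMOD (p : ℤ) ^ 3]) :=
  binom_product_congruence_general p hp m k h
end

section
/- Let p > 3 be a prime. For every integer m with p/2 < m < p, p^2 divides the rational number (2m)!^4 · p / ((4m+1)! · (m!)^4), in the sense that v_p((2m)!^4 p) - v_p((4m+1)! (m!)^4) ≥ 2. -/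
theorem padic_val_at_least_two (p : ℕ) (hp : p.Prime) (hp3 : 3 < p)
    (m : ℕ) (hm1 : p < 2 * m) (hm2 : m < p) :
    2 ≤ padicValRat p
        (((2 * m).factorial : ℚ) ^ 4 * p /
          (((4 * m + 1).factorial : ℚ) * (m.factorial : ℚ) ^ 4)) := by
  haveI : Fact p.Prime := ⟨hp⟩
  have hp0 : 0 < p := hp.pos
  have hp4 : p ≠ 4 := by rintro rfl; norm_num at hp
  have hp5 : 5 ≤ p := by omega
  have hpp : 4 * m + 1 < p ^ 2 := by nlinarith
  -- valuation of m!
  have hvm : padicValNat p m.factorial = 0 := by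
    apply padicValNat.eq_zero_of_not_dvd
    intro h
    have := (Nat.Prime.dvd_factorial hp).mp h
    omega
  -- valuation of (2m)!
  have hv2m : padicValNat p (2 * m).factorial = 1 := by
    have hlog : Nat.log p (2 * m) < 2 := by
      apply Nat.log_lt_of_lt_pow (by omega)
      nlinarith
    rw [padicValNat_factorial hlog]
    rw [show Finset.Ico 1 2 = {1} by rfl]
    simp only [Finset.sum_singleton, pow_one]
    exact Nat.div_eq_of_lt_le (by omega) (by omega)
  -- valuation of (4m+1)!
  have hv4m : padicValNat p (4 * m + 1).factorial ≤ 3 := by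
    have hlog : Nat.log p (4 * m + 1) < 2 := by
      apply Nat.log_lt_of_lt_pow (by omega)
      exact hpp
    rw [padicValNat_factorial hlog]
    rw [show Finset.Ico 1 2 = {1} by rfl]
    simp only [Finset.sum_singleton, pow_one]
    have : (4 * m + 1) / p < 4 := by
      rw [Nat.div_lt_iff_lt_mul hp0]
      omega
    omega
  -- rewrite the rational as a quotient of naturals
  have hN : ((2 * m).factorial : ℚ) ^ 4 * p = (((2 * m).factorial ^ 4 * p : ℕ) : ℚ) := by
    push_cast; ring
  have hD : ((4 * m + 1).factorial : ℚ) * (m.factorial : ℚ) ^ 4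
      = (((4 * m + 1).factorial * m.factorial ^ 4 : ℕ) : ℚ) := by
    push_cast; ring
  rw [hN, hD]
  have hNne : ((2 * m).factorial ^ 4 * p : ℕ) ≠ 0 :=
    by positivity
  have hDne : ((4 * m + 1).factorial * m.factorial ^ 4 : ℕ) ≠ 0 :=
    by positivity
  rw [padicValRat.div (by exact_mod_cast hNne) (by exact_mod_cast hDne),
    padicValRat.of_nat, padicValRat.of_nat]
  have h1 : padicValNat p ((2 * m).factorial ^ 4 * p) = 5 := by
    rw [padicValNat.mul (by positivity) (by omega),
      padicValNat.pow (n := 4), padicValNat.self hp.one_lt, hv2m]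
  have h2 : padicValNat p ((4 * m + 1).factorial * m.factorial ^ 4) ≤ 3 := by
    rw [padicValNat.mul (by positivity) (by positivity),
      padicValNat.pow (n := 4), hvm]
    omega
  rw [h1]
  have : (padicValNat p ((4 * m + 1).factorial * m.factorial ^ 4) : ℤ) ≤ 3 := by
    exact_mod_cast h2
  omega
end

section
/- Let p > 3 be a prime and m an integer with 0 ≤ m ≤ (p-1)/2. Then p·(2m)!^2/(4m+1)! is a p-adic integer, and C(p+2m, 4m+1) = p·∏_{i=1}^{2m}(p^2 - i^2)/(4m+1)! ≡ p·(2m)!^2·(-1)^{2m}/(4m+1)! = p·(2m)!^2/(4m+1)! (mod p^2). -/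
open Finset

lemma prod_centered (k : ℕ) (x : ℤ) :
    (∏ i ∈ Finset.range (2 * k + 1), (x + (k : ℤ) - (i : ℤ))) =
      x * ∏ i ∈ Finset.range k, (x ^ 2 - ((i : ℤ) + 1) ^ 2) := by
  induction k with
  | zero => simp
  | succ k ih =>
    have h1 : 2 * (k + 1) + 1 = (2 * k + 1 + 1) + 1 := by ring
    rw [h1, Finset.prod_range_succ', Finset.prod_range_succ]
    have h2 : (∏ i ∈ Finset.range (2 * k + 1),
        (x + ((k + 1 : ℕ) : ℤ) - ((i + 1 : ℕ) : ℤ)))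
        = x * ∏ i ∈ Finset.range k, (x ^ 2 - ((i : ℤ) + 1) ^ 2) := by
      rw [← ih]
      apply Finset.prod_congr rfl
      intro i _
      push_cast
      ring
    rw [h2, Finset.prod_range_succ]
    push_cast
    ring

theorem binom_p_adic_congruence (p : ℕ) [Fact p.Prime] (hp3 : 3 < p)
    (m : ℕ) (hm : m ≤ (p - 1) / 2) :
    ‖(((p + 2 * m).choose (4 * m + 1) : ℚ_[p])) -
        (p : ℚ_[p]) * ((2 * m).factorial : ℚ_[p]) ^ 2 / ((4 * m + 1).factorial : ℚ_[p])‖ ≤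
      (p : ℝ) ^ (-2 : ℤ) := by
  have hp : p.Prime := Fact.out
  have hp1 : 1 < p := hp.one_lt
  have h2m : 2 * m ≤ p - 1 := by
    calc 2 * m ≤ 2 * ((p - 1) / 2) := Nat.mul_le_mul_left 2 hm
    _ ≤ p - 1 := Nat.mul_div_le _ _
  have h2m' : 2 * m + 1 ≤ p := by omega
  have h4m : 4 * m + 1 < 2 * p := by omega
  -- the integer A
  set A : ℤ := ∏ i ∈ Finset.range (2 * m), ((p : ℤ) ^ 2 - ((i : ℤ) + 1) ^ 2) with hA
  -- descFactorial identity
  have hdesc : (((4 * m + 1).factorial : ℤ) * ((p + 2 * m).choose (4 * m + 1) : ℤ)) =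
      (p : ℤ) * A := by
    have h := Nat.descFactorial_eq_factorial_mul_choose (p + 2 * m) (4 * m + 1)
    have h2 : ((p + 2 * m).descFactorial (4 * m + 1) : ℤ)
        = ∏ i ∈ Finset.range (2 * (2 * m) + 1), ((p : ℤ) + ((2 * m : ℕ) : ℤ) - (i : ℤ)) := by
      rw [Nat.descFactorial_eq_prod_range]
      have : 4 * m + 1 = 2 * (2 * m) + 1 := by ring
      rw [this]
      push_cast [Nat.cast_prod]
      apply Finset.prod_congr rfl
      intro i hi
      simp only [Finset.mem_range] at hi
      have : i ≤ p + 2 * m := by omega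
      push_cast [Nat.cast_sub this]
      ring
    rw [← hA] at *
    calc ((4 * m + 1).factorial : ℤ) * ((p + 2 * m).choose (4 * m + 1) : ℤ)
        = ((p + 2 * m).descFactorial (4 * m + 1) : ℤ) := by exact_mod_cast congrArg (Nat.cast : ℕ → ℤ) h.symm
      _ = ∏ i ∈ Finset.range (2 * (2 * m) + 1), ((p : ℤ) + ((2 * m : ℕ) : ℤ) - (i : ℤ)) := h2
      _ = (p : ℤ) * A := by rw [prod_centered (2 * m) (p : ℤ)]
  -- p^2 divides A - (2m)!^2
  have hdvd2 : ((p : ℤ)) ^ 2 ∣ A - ((2 * m).factorial : ℤ) ^ 2 := by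
    have : ((A - ((2 * m).factorial : ℤ) ^ 2 : ℤ) : ZMod (p ^ 2)) = 0 := by
      have hp2 : ((p : ZMod (p ^ 2)) : ZMod (p ^ 2)) ^ 2 = 0 := by
        rw [← Nat.cast_pow, ZMod.natCast_self]
      push_cast [hA]
      rw [hp2]
      have step1 : (∏ i ∈ Finset.range (2 * m), ((0 : ZMod (p ^ 2)) - ((i : ZMod (p ^ 2)) + 1) ^ 2))
          = ∏ i ∈ Finset.range (2 * m), ((-1 : ZMod (p ^ 2)) * ((i : ZMod (p ^ 2)) + 1) ^ 2) := by
        apply Finset.prod_congr rfl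
        intro i _
        ring
      rw [step1, Finset.prod_mul_distrib, Finset.prod_const, Finset.card_range,
        Finset.prod_pow]
      have hfac : (∏ i ∈ Finset.range (2 * m), ((i : ZMod (p ^ 2)) + 1))
          = ((2 * m).factorial : ZMod (p ^ 2)) := by
        rw [← Finset.prod_range_add_one_eq_factorial (2 * m)]
        push_cast
        rfl
      rw [hfac, Even.neg_one_pow ⟨m, by ring⟩]
      ring
    have := (ZMod.intCast_zmod_eq_zero_iff_dvd _ (p ^ 2)).mp this
    exact_mod_cast this
  -- p^3 divides D
  set D : ℤ := ((4 * m + 1).factorial : ℤ) * ((p + 2 * m).choose (4 * m + 1) : ℤ)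
      - (p : ℤ) * ((2 * m).factorial : ℤ) ^ 2 with hD
  have hdvd3 : ((p : ℤ)) ^ 3 ∣ D := by
    rw [hD, hdesc]
    have : (p : ℤ) * A - (p : ℤ) * ((2 * m).factorial : ℤ) ^ 2
        = (p : ℤ) * (A - ((2 * m).factorial : ℤ) ^ 2) := by ring
    rw [this]
    obtain ⟨c, hc⟩ := hdvd2
    exact ⟨c, by rw [hc]; ring⟩
  -- norms
  have hFne : ((4 * m + 1).factorial : ℚ_[p]) ≠ 0 := by
    exact Nat.cast_ne_zero.mpr (Nat.factorial_ne_zero _)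
  have key : (((p + 2 * m).choose (4 * m + 1) : ℚ_[p])) -
      (p : ℚ_[p]) * ((2 * m).factorial : ℚ_[p]) ^ 2 / ((4 * m + 1).factorial : ℚ_[p])
      = ((D : ℤ) : ℚ_[p]) / ((4 * m + 1).factorial : ℚ_[p]) := by
    rw [hD]
    push_cast
    field_simp
  rw [key, norm_div]
  have hnormD : ‖((D : ℤ) : ℚ_[p])‖ ≤ (p : ℝ) ^ (-(3 : ℕ) : ℤ) := by
    rw [Padic.norm_int_le_pow_iff_dvd]
    exact_mod_cast hdvd3
  -- valuation of factorial
  have hval : padicValNat p ((4 * m + 1).factorial) ≤ 1 := by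
    rw [padicValNat_factorial (b := 2) (by
      apply Nat.log_lt_of_lt_pow (by omega)
      calc 4 * m + 1 < 2 * p := h4m
      _ ≤ p * p := by nlinarith
      _ = p ^ 2 := by ring)]
    have : ∑ i ∈ Finset.Ico 1 2, (4 * m + 1) / p ^ i = (4 * m + 1) / p := by simp
    rw [this]
    rw [Nat.div_le_iff_le_mul_add_pred (by omega)]
    omega
  have hnormF : (p : ℝ) ^ (-(1 : ℕ) : ℤ) ≤ ‖((4 * m + 1).factorial : ℚ_[p])‖ := by
    rw [Padic.norm_eq_zpow_neg_valuation hFne, Padic.valuation_natCast]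
    apply zpow_le_zpow_right₀ (by exact_mod_cast hp1.le)
    simp only [neg_le_neg_iff]
    exact_mod_cast hval
  have hppos : (0 : ℝ) < (p : ℝ) := by exact_mod_cast hp.pos
  calc ‖((D : ℤ) : ℚ_[p])‖ / ‖((4 * m + 1).factorial : ℚ_[p])‖
      ≤ (p : ℝ) ^ (-(3 : ℕ) : ℤ) / (p : ℝ) ^ (-(1 : ℕ) : ℤ) := by
        apply div_le_div₀ (by positivity) hnormD (by positivity) hnormF
    _ = (p : ℝ) ^ (-2 : ℤ) := by
        rw [← zpow_sub₀ (ne_of_gt hppos)]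
        norm_num
end

section
/- Let p > 3 be a prime and x an integer. Then ∑_{k=0}^{p-1} A_k(x) ≡ ∑_{k=0}^{(p-1)/2} C(p+2k, 4k+1) · C(2k,k)^2 · x^k (mod p^2), where A_k(x) = ∑_{j=0}^{k} C(k,j)^2 C(k+j,j)^2 x^j. -/
/-!
Since `C(k, j) C(k + j, j) = C(k + j, 2j) C(2j, j)`, exchanging the sums turns the left side into
`∑_{j < p} C(2j, j)² xʲ ∑_{k < p} C(k + j, 2j)²`. When `p ≤ 2j < 2p`, `p ∣ C(2j, j)` and the
`j`-th terms of both sides vanish mod `p²`. When `2j < p`, the Vandermonde-type identity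
`∑_{k < n} C(k + j, 2j)² = ∑_{i ≤ 2j} C(2j, i)² C(n + j + i, 4j + 1)` shows that
`(4j + 1)! (∑_{k < n} C(k + j, 2j)² - C(n + 2j, 4j + 1))` is an integer polynomial `F_j(n)`.
Reflecting the Pochhammer factors makes `F_j` odd, and its linear coefficient vanishes by a
finite-difference identity, so `X³ ∣ F_j` and `p³ ∣ F_j(p)`. As `4j + 1 < 2p`,
`p² ∤ (4j + 1)!`, hence `p² ∣ ∑_{k < p} C(k + j, 2j)² - C(p + 2j, 4j + 1)`.
-/

open Finset Polynomial
open scoped Nat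

theorem Nat.sum_range_choose_sq_mul_choose (a t : ℕ) :
    ∑ i ∈ range (a + 1), a.choose i ^ 2 * i.choose t = a.choose t * (2 * a - t).choose a := by
  rcases lt_or_ge a t with hat | hta
  · rw [Nat.choose_eq_zero_of_lt hat, zero_mul]
    exact sum_eq_zero fun i hi => by
      rw [Nat.choose_eq_zero_of_lt (n := i) (by grind), mul_zero]
  obtain ⟨u, rfl⟩ := Nat.exists_eq_add_of_le hta
  have hvand : (u + (t + u)).choose u =
      ∑ s ∈ range (u + 1), u.choose s * (t + u).choose (u - s) := by
    rw [Nat.add_choose_eq, Finset.Nat.sum_antidiagonal_eq_sum_range_succ_mk]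
  rw [show t + u + 1 = t + (u + 1) by ring, sum_range_add,
    sum_eq_zero fun i hi => by rw [Nat.choose_eq_zero_of_lt (mem_range.1 hi), mul_zero],
    zero_add, show 2 * (t + u) - t = u + (t + u) by omega, ← Nat.choose_symm_add, hvand, mul_sum]
  refine sum_congr rfl fun s hs => ?_
  have hs : s ≤ u := Nat.lt_succ_iff.1 (mem_range.1 hs)
  rw [sq, mul_assoc, Nat.choose_mul (Nat.le_add_right t s), Nat.add_sub_cancel_left,
    Nat.add_sub_cancel_left, Nat.choose_symm_of_eq_add (by omega : t + u = (t + s) + (u - s))]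
  ring

theorem Nat.sum_range_choose_sq_mul_choose_add (a m : ℕ) :
    ∑ i ∈ range (a + 1), a.choose i ^ 2 * (m + i).choose (2 * a) = m.choose a ^ 2 := by
  have hvand : ∀ i, (m + i).choose (2 * a) =
      ∑ t ∈ range (2 * a + 1), i.choose t * m.choose (2 * a - t) := fun i => by
    rw [add_comm, Nat.add_choose_eq, Finset.Nat.sum_antidiagonal_eq_sum_range_succ_mk]
  calc ∑ i ∈ range (a + 1), a.choose i ^ 2 * (m + i).choose (2 * a)
      = ∑ t ∈ range (2 * a + 1),
          (∑ i ∈ range (a + 1), a.choose i ^ 2 * i.choose t) * m.choose (2 * a - t) := by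
        simp_rw [hvand, mul_sum, sum_mul, mul_assoc]
        exact sum_comm
    _ = ∑ t ∈ range (a + 1), a.choose t * ((2 * a - t).choose a * m.choose (2 * a - t)) := by
        simp_rw [Nat.sum_range_choose_sq_mul_choose, mul_assoc]
        refine (sum_subset (range_subset_range.2 (by omega)) fun t _ ht => ?_).symm
        rw [Nat.choose_eq_zero_of_lt (by simpa using ht), zero_mul]
    _ = m.choose a * ∑ t ∈ range (a + 1), a.choose t * (m - a).choose (a - t) := by
        rw [mul_sum]
        refine sum_congr rfl fun t ht => ?_
        have ht : t ≤ a := Nat.lt_succ_iff.1 (mem_range.1 ht)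
        rw [mul_comm ((2 * a - t).choose a), Nat.choose_mul (by omega),
          show 2 * a - t - a = a - t by omega]
        ring
    _ = m.choose a ^ 2 := by
        rw [← Finset.Nat.sum_antidiagonal_eq_sum_range_succ_mk
          (fun ij => a.choose ij.1 * (m - a).choose ij.2), ← Nat.add_choose_eq]
        rcases le_or_gt a m with ham | hma
        · rw [Nat.add_sub_cancel' ham, sq]
        · rw [Nat.choose_eq_zero_of_lt hma, zero_mul, sq, zero_mul]

theorem Nat.sum_range_choose_upper_sq (a N : ℕ) :
    ∑ m ∈ range N, m.choose a ^ 2 =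
      ∑ i ∈ range (a + 1), a.choose i ^ 2 * (N + i).choose (2 * a + 1) := by
  induction N with
  | zero =>
    refine (sum_eq_zero fun i hi => ?_).symm
    rw [Nat.choose_eq_zero_of_lt (n := 0 + i) (by simp at hi; omega), mul_zero]
  | succ N ih =>
    rw [sum_range_succ (fun m => m.choose a ^ 2), ih,
      ← Nat.sum_range_choose_sq_mul_choose_add a N, ← sum_add_distrib]
    refine sum_congr rfl fun i _ => ?_
    rw [add_right_comm, Nat.choose_succ_succ' (N + i)]
    ring

section
variable {R : Type*} [CommRing R]

theorem descPochhammer_eval_neg (k : ℕ) (r : R) :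
    (descPochhammer R k).eval (-r) = (-1) ^ k * (descPochhammer R k).eval (r + k - 1) := by
  rw [descPochhammer_eval_eq_ascPochhammer, show -r - k + 1 = -(r + k - 1) by ring,
    ascPochhammer_eval_neg_eq_descPochhammer]

theorem descPochhammer_comp_X_add_eval_natCast (k m n : ℕ) :
    ((descPochhammer R k).comp (X + (m : R[X]))).eval (n : R) = k ! * (n + m).choose k := by
  rw [eval_comp, eval_add, eval_X, eval_natCast, ← Nat.cast_add,
    descPochhammer_eval_eq_descFactorial, Nat.descFactorial_eq_factorial_mul_choose, Nat.cast_mul]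

theorem coeff_one_descPochhammer_comp_X_add_natCast (m r : ℕ) :
    ((descPochhammer R (m + r + 1)).comp (X + (m : R[X]))).coeff 1 = (-1) ^ r * m ! * r ! := by
  have hsplit : (descPochhammer R (m + r + 1)).comp (X + (m : R[X])) =
      X * ((descPochhammer R m).comp (X + (m : R[X])) * (descPochhammer R r).comp (X - 1)) := by
    rw [add_assoc, ← descPochhammer_mul, mul_comp, comp_assoc, sub_comp, X_comp, natCast_comp,
      add_sub_cancel_right, comp_X, descPochhammer_succ_left]
    ring
  rw [hsplit, show (1 : ℕ) = 0 + 1 from rfl, coeff_X_mul, coeff_zero_eq_eval_zero, eval_mul,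
    eval_comp, eval_comp]
  simp only [eval_add, eval_sub, eval_X, eval_natCast, eval_one, zero_add, zero_sub]
  rw [descPochhammer_eval_eq_descFactorial, Nat.descFactorial_self, descPochhammer_eval_neg,
    add_sub_cancel_left, descPochhammer_eval_eq_descFactorial, Nat.descFactorial_self]
  ring

theorem Polynomial.sum_range_neg_one_pow_mul_choose_mul_eval (P : R[X]) :
    ∑ k ∈ range (P.natDegree + 1),
        (-1 : R) ^ (P.natDegree - k) * P.natDegree.choose k * P.eval (k : R) =
      P.natDegree ! * P.leadingCoeff := by
  have h := congr_fun P.fwdDiff_iter_degree_eq_factorial 0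
  rw [fwdDiff_iter_eq_sum_shift] at h
  simpa [zsmul_eq_mul, mul_comm] using h

end

theorem Polynomial.coeff_eq_zero_of_comp_neg_X {R : Type*} [CommRing R] [NoZeroDivisors R]
    [CharZero R] {f : R[X]} (hf : f.comp (-X) = -f) {n : ℕ} (hn : Even n) : f.coeff n = 0 := by
  have h := congrArg (coeff · n) hf
  simp only [show (-X : R[X]) = C (-1) * X by simp, comp_C_mul_X_coeff, hn.neg_one_pow, mul_one,
    coeff_neg] at h
  exact self_eq_neg.1 h

theorem Nat.Prime.not_sq_dvd_factorial {p n : ℕ} (hp : p.Prime) (hn : n < 2 * p) :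
    ¬ p ^ 2 ∣ n ! := by
  have hlog : Nat.log p n < 2 := by
    rcases Nat.eq_zero_or_pos n with rfl | hn0
    · simp
    · exact Nat.log_lt_of_lt_pow hn0.ne' (by nlinarith [hp.two_le])
  rw [hp.pow_dvd_factorial_iff hlog]
  simp [Nat.div_lt_of_lt_mul (by omega : n < p * 2)]

theorem Prime.pow_dvd_of_pow_succ_dvd_mul_of_not_sq_dvd {M : Type*} [CommMonoidWithZero M]
    [IsCancelMulZero M] {p a b : M} (hp : Prime p) {k : ℕ} (ha : ¬ p ^ 2 ∣ a)
    (h : p ^ (k + 1) ∣ a * b) : p ^ k ∣ b := by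
  by_cases hpa : p ∣ a
  · obtain ⟨c, rfl⟩ := hpa
    have hpc : ¬ p ∣ c := fun hpc => ha (by rw [sq]; exact mul_dvd_mul_left p hpc)
    rw [pow_succ', mul_assoc] at h
    exact hp.pow_dvd_of_dvd_mul_left k hpc ((mul_dvd_mul_iff_left hp.ne_zero).1 h)
  · exact (pow_dvd_pow p k.le_succ).trans (hp.pow_dvd_of_dvd_mul_left _ hpa h)

namespace Apery

theorem sum_neg_one_pow_mul_choose_sq_mul_factorial (j : ℕ) :
    ∑ i ∈ range (2 * j + 1),
        (-1 : ℤ) ^ (3 * j - i) * (2 * j).choose i ^ 2 * (j + i)! * (3 * j - i)! =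
      ((2 * j)! : ℤ) ^ 2 := by
  set Q : ℤ[X] := (descPochhammer ℤ j).comp (X + C (j : ℤ)) *
    (ascPochhammer ℤ j).comp (X - C (3 * j : ℤ)) with hQ
  have hQ_monic : Q.Monic :=
    ((monic_descPochhammer ℤ j).comp_X_add_C _).mul ((monic_ascPochhammer ℤ j).comp_X_sub_C _)
  have hQ_natDegree : Q.natDegree = 2 * j := by
    rw [hQ, ((monic_descPochhammer ℤ j).comp_X_add_C _).natDegree_mul
      ((monic_ascPochhammer ℤ j).comp_X_sub_C _), natDegree_comp, natDegree_comp,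
      descPochhammer_natDegree, ascPochhammer_natDegree, natDegree_X_add_C, natDegree_X_sub_C]
    ring
  have hQ_eval : ∀ i ≤ 2 * j, Q.eval (i : ℤ) =
      (-1) ^ j * ((i + j).descFactorial j * (3 * j - i).descFactorial j : ℕ) := by
    intro i hi
    rw [hQ, eval_mul, eval_comp, eval_comp]
    simp only [eval_add, eval_sub, eval_X, eval_C]
    rw [← Nat.cast_add, descPochhammer_eval_eq_descFactorial,
      show (i : ℤ) - 3 * j = -((3 * j - i : ℕ) : ℤ) by
        push_cast [show i ≤ 3 * j by omega]; ring,
      ascPochhammer_eval_neg_eq_descPochhammer, descPochhammer_eval_eq_descFactorial]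
    push_cast
    ring
  have hfactorial : ∀ i ≤ 2 * j,
      (2 * j)! * ((2 * j).choose i * ((i + j).descFactorial j * (3 * j - i).descFactorial j)) =
        (2 * j).choose i ^ 2 * (j + i)! * (3 * j - i)! := by
    intro i hi
    have h1 := Nat.choose_mul_factorial_mul_factorial hi
    have h2 : i ! * (i + j).descFactorial j = (j + i)! := by
      simpa [add_comm j i] using Nat.factorial_mul_descFactorial (Nat.le_add_left j i)
    have h3 : (2 * j - i)! * (3 * j - i).descFactorial j = (3 * j - i)! := by
      rw [← Nat.factorial_mul_descFactorial (show j ≤ 3 * j - i by omega),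
        show 3 * j - i - j = 2 * j - i by omega]
    rw [← h1, ← h2, ← h3]
    ring
  have h := Q.sum_range_neg_one_pow_mul_choose_mul_eval
  rw [hQ_natDegree, hQ_monic.leadingCoeff, mul_one] at h
  calc ∑ i ∈ range (2 * j + 1),
        (-1 : ℤ) ^ (3 * j - i) * (2 * j).choose i ^ 2 * (j + i)! * (3 * j - i)!
      = (2 * j)! * ∑ i ∈ range (2 * j + 1),
          (-1 : ℤ) ^ (2 * j - i) * (2 * j).choose i * Q.eval (i : ℤ) := by
        rw [mul_sum]
        refine sum_congr rfl fun i hi => ?_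
        have hi : i ≤ 2 * j := Nat.lt_succ_iff.1 (mem_range.1 hi)
        have hsign : (-1 : ℤ) ^ (3 * j - i) = (-1) ^ (2 * j - i) * (-1) ^ j := by
          rw [← pow_add]; congr 1; omega
        have := congrArg (Nat.cast : ℕ → ℤ) (hfactorial i hi)
        push_cast at this
        rw [hQ_eval i hi, hsign]
        push_cast
        linear_combination (-1 : ℤ) ^ (2 * j - i) * (-1 : ℤ) ^ j * this.symm
    _ = ((2 * j)! : ℤ) ^ 2 := by rw [h, sq]

theorem sum_range_choose_add_sq (j n : ℕ) :
    ∑ k ∈ range n, (k + j).choose (2 * j) ^ 2 =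
      ∑ i ∈ range (2 * j + 1), (2 * j).choose i ^ 2 * (n + j + i).choose (4 * j + 1) := by
  calc ∑ k ∈ range n, (k + j).choose (2 * j) ^ 2
      = ∑ m ∈ range (j + n), m.choose (2 * j) ^ 2 := by
        rw [sum_range_add, sum_eq_zero (s := range j) fun m hm => by
          rw [Nat.choose_eq_zero_of_lt (by simp at hm; omega), zero_pow two_ne_zero], zero_add]
        simp_rw [add_comm j]
    _ = _ := by
        rw [Nat.sum_range_choose_upper_sq, add_comm j n, show 2 * (2 * j) + 1 = 4 * j + 1 by ring]

noncomputable def defectPoly (j : ℕ) : ℤ[X] :=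
  ∑ i ∈ range (2 * j + 1),
      C ((2 * j).choose i ^ 2 : ℤ) *
        (descPochhammer ℤ (4 * j + 1)).comp (X + ((j + i : ℕ) : ℤ[X])) -
    (descPochhammer ℤ (4 * j + 1)).comp (X + ((2 * j : ℕ) : ℤ[X]))

theorem defectPoly_eval_natCast (j n : ℕ) :
    (defectPoly j).eval (n : ℤ) = (4 * j + 1)! *
      (((∑ k ∈ range n, (k + j).choose (2 * j) ^ 2 : ℕ) : ℤ) -
        (n + 2 * j).choose (4 * j + 1)) := by
  simp only [defectPoly, eval_sub, eval_finsetSum, eval_mul, eval_C,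
    descPochhammer_comp_X_add_eval_natCast, sum_range_choose_add_sq]
  push_cast
  rw [mul_sub, mul_sum]
  exact congrArg₂ _ (sum_congr rfl fun i _ => by ring_nf) rfl

theorem defectPoly_comp_neg_X (j : ℕ) : (defectPoly j).comp (-X) = -defectPoly j := by
  have heval_neg : ∀ (m : ℕ) (r : ℤ), (descPochhammer ℤ (4 * j + 1)).eval (-r + m) =
      -(descPochhammer ℤ (4 * j + 1)).eval (r + (4 * j - m : ℤ)) := by
    intro m r
    rw [show -r + m = -(r - m) by ring, descPochhammer_eval_neg, Odd.neg_one_pow ⟨2 * j, by ring⟩]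
    push_cast
    ring_nf
  refine Polynomial.funext fun r => ?_
  simp only [defectPoly, eval_comp, eval_neg, eval_sub, eval_finsetSum, eval_mul, eval_C,
    eval_add, eval_X, eval_natCast, heval_neg]
  rw [← sum_range_reflect]
  have hreflect : ∀ i ∈ range (2 * j + 1),
      ((2 * j).choose (2 * j + 1 - 1 - i) : ℤ) ^ 2 *
          -(descPochhammer ℤ (4 * j + 1)).eval
            (r + (4 * j - ((j + (2 * j + 1 - 1 - i) : ℕ) : ℤ))) =
        -(((2 * j).choose i : ℤ) ^ 2 *
          (descPochhammer ℤ (4 * j + 1)).eval (r + ((j + i : ℕ) : ℤ))) := by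
    intro i hi
    have hi : i ≤ 2 * j := Nat.lt_succ_iff.1 (mem_range.1 hi)
    rw [show 2 * j + 1 - 1 - i = 2 * j - i by omega, Nat.choose_symm hi]
    push_cast [hi]
    ring_nf
  rw [sum_congr rfl hreflect, sum_neg_distrib]
  push_cast
  ring_nf

theorem coeff_one_defectPoly (j : ℕ) : (defectPoly j).coeff 1 = 0 := by
  rw [defectPoly, coeff_sub, finsetSum_coeff]
  have hterm : ∀ i ∈ range (2 * j + 1),
      (C (((2 * j).choose i : ℤ) ^ 2) *
          (descPochhammer ℤ (4 * j + 1)).comp (X + ((j + i : ℕ) : ℤ[X]))).coeff 1 =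
        (-1 : ℤ) ^ (3 * j - i) * (2 * j).choose i ^ 2 * (j + i)! * (3 * j - i)! := by
    intro i hi
    have hi : i ≤ 2 * j := Nat.lt_succ_iff.1 (mem_range.1 hi)
    rw [coeff_C_mul, show 4 * j + 1 = (j + i) + (3 * j - i) + 1 by omega,
      coeff_one_descPochhammer_comp_X_add_natCast]
    ring
  rw [sum_congr rfl hterm, sum_neg_one_pow_mul_choose_sq_mul_factorial,
    show 4 * j + 1 = 2 * j + 2 * j + 1 by ring, coeff_one_descPochhammer_comp_X_add_natCast,
    (even_two_mul j).neg_one_pow]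
  ring

theorem X_pow_three_dvd_defectPoly (j : ℕ) : (X : ℤ[X]) ^ 3 ∣ defectPoly j := by
  refine X_pow_dvd_iff.2 fun d hd => ?_
  interval_cases d
  · exact coeff_eq_zero_of_comp_neg_X (defectPoly_comp_neg_X j) (by decide)
  · exact coeff_one_defectPoly j
  · exact coeff_eq_zero_of_comp_neg_X (defectPoly_comp_neg_X j) (by decide)

theorem sum_range_choose_add_sq_modEq {p j : ℕ} (hp : p.Prime) (hj : 2 * j < p) :
    ∑ k ∈ range p, (k + j).choose (2 * j) ^ 2 ≡ (p + 2 * j).choose (4 * j + 1) [MOD p ^ 2] := by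
  have hdvd : (p : ℤ) ^ (2 + 1) ∣ (4 * j + 1)! *
      (((∑ k ∈ range p, (k + j).choose (2 * j) ^ 2 : ℕ) : ℤ) -
        (p + 2 * j).choose (4 * j + 1)) := by
    simpa [defectPoly_eval_natCast] using eval_dvd (x := (p : ℤ)) (X_pow_three_dvd_defectPoly j)
  have hfact : ¬ (p : ℤ) ^ 2 ∣ (4 * j + 1)! := by
    exact_mod_cast hp.not_sq_dvd_factorial (by omega)
  rw [← Int.natCast_modEq_iff, Int.modEq_comm, Int.modEq_iff_dvd]
  exact_mod_cast
    (Nat.prime_iff_prime_int.1 hp).pow_dvd_of_pow_succ_dvd_mul_of_not_sq_dvd hfact hdvd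

theorem sum_range_apery_eq {R : Type*} [CommSemiring R] (n : ℕ) (x : R) :
    ∑ k ∈ range n, ∑ j ∈ range (k + 1),
        (k.choose j : R) ^ 2 * ((k + j).choose j : R) ^ 2 * x ^ j =
      ∑ j ∈ range n, ((2 * j).choose j : R) ^ 2 * x ^ j *
        ((∑ k ∈ range n, (k + j).choose (2 * j) ^ 2 : ℕ) : R) := by
  have hterm : ∀ k j, (k.choose j : R) ^ 2 * ((k + j).choose j : R) ^ 2 =
      ((2 * j).choose j : R) ^ 2 * (k + j).choose (2 * j) ^ 2 := by
    intro k j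
    have h := Nat.choose_mul (n := k + j) (k := 2 * j) (s := j) (by omega)
    rw [Nat.add_sub_cancel, show 2 * j - j = j by omega] at h
    rw [← mul_pow, ← mul_pow, ← Nat.cast_mul, ← Nat.cast_mul, mul_comm ((2 * j).choose j), h,
      mul_comm]
  have hextend : ∀ k ∈ range n,
      ∑ j ∈ range (k + 1), (k.choose j : R) ^ 2 * ((k + j).choose j : R) ^ 2 * x ^ j =
        ∑ j ∈ range n, ((2 * j).choose j : R) ^ 2 * x ^ j * (k + j).choose (2 * j) ^ 2 := by
    intro k hk
    refine sum_subset_zero_on_sdiff (range_subset_range.2 (mem_range.1 hk)) (fun j hj => ?_)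
      (fun j _ => by rw [hterm]; ring)
    simp only [mem_sdiff, mem_range, not_lt] at hj
    rw [Nat.choose_eq_zero_of_lt (by omega : k + j < 2 * j)]
    simp
  rw [sum_congr rfl hextend, sum_comm]
  push_cast
  simp_rw [mul_sum]

theorem sq_choose_two_mul_self_eq_zero {p j : ℕ} (hp : p.Prime) (hpj : p ≤ 2 * j)
    (hjp : j < p) :
    ((2 * j).choose j : ZMod (p ^ 2)) ^ 2 = 0 := by
  obtain ⟨c, hc⟩ := two_mul j ▸ hp.dvd_choose_add hjp hjp (by omega)
  rw [hc, Nat.cast_mul, mul_pow, ← Nat.cast_pow, ZMod.natCast_self, zero_mul]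

end Apery

theorem apery_sum_mod_p_squared_general (p : ℕ) (hp : p.Prime) (x : ℤ) :
    ∑ k ∈ range p,
        (∑ j ∈ range (k + 1),
          (k.choose j : ℤ) ^ 2 * ((k + j).choose j : ℤ) ^ 2 * x ^ j) ≡
      ∑ k ∈ range ((p - 1) / 2 + 1),
        ((p + 2 * k).choose (4 * k + 1) : ℤ) * ((2 * k).choose k : ℤ) ^ 2 * x ^ k
      [ZMOD (p : ℤ) ^ 2] := by
  rw [show (p : ℤ) ^ 2 = ((p ^ 2 : ℕ) : ℤ) by push_cast; rfl, ← ZMod.intCast_eq_intCast_iff]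
  push_cast
  rw [Apery.sum_range_apery_eq]
  calc ∑ j ∈ range p, ((2 * j).choose j : ZMod (p ^ 2)) ^ 2 * (x : ZMod (p ^ 2)) ^ j *
        ((∑ k ∈ range p, (k + j).choose (2 * j) ^ 2 : ℕ) : ZMod (p ^ 2))
      = ∑ j ∈ range p, ((p + 2 * j).choose (4 * j + 1) : ZMod (p ^ 2)) *
          ((2 * j).choose j : ZMod (p ^ 2)) ^ 2 * (x : ZMod (p ^ 2)) ^ j := by
        refine sum_congr rfl fun j hj => ?_
        rcases lt_or_ge (2 * j) p with hjp | hpj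
        · rw [(ZMod.natCast_eq_natCast_iff _ _ _).2 (Apery.sum_range_choose_add_sq_modEq hp hjp)]
          ring
        · rw [Apery.sq_choose_two_mul_self_eq_zero hp hpj (mem_range.1 hj)]
          ring
    _ = _ := by
        have hp1 := hp.one_le
        refine (sum_subset (range_subset_range.2 (by omega)) fun j hj hj' => ?_).symm
        simp only [mem_range, not_lt] at hj hj'
        rw [Apery.sq_choose_two_mul_self_eq_zero hp (by omega) hj]
        ring

theorem apery_sum_mod_p_squared (p : ℕ) (hp : p.Prime) (hp3 : 3 < p) (x : ℤ) :
    ∑ k ∈ range p,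
        (∑ j ∈ range (k + 1),
          (k.choose j : ℤ) ^ 2 * ((k + j).choose j : ℤ) ^ 2 * x ^ j) ≡
      ∑ k ∈ range ((p - 1) / 2 + 1),
        ((p + 2 * k).choose (4 * k + 1) : ℤ) * ((2 * k).choose k : ℤ) ^ 2 * x ^ k
      [ZMOD (p : ℤ) ^ 2] :=
  apery_sum_mod_p_squared_general p hp x
end

section
/- For every positive integer n, every integer r ≥ 2, and every integer x, n divides both ∑_{k=0}^{n-1} (2k+1) S_k^{(r)}(x) and ∑_{k=0}^{n-1} (-1)^k (2k+1) S_k^{(r)}(x), where S_k^{(r)}(x) = ∑_{j=0}^{k} C(k,j)^r C(k+j,j)^r x^j. -/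
/-!
Write `L ℓ m = C(ℓ, m) C(ℓ + m, m)`, so that `S_ℓ^{(r)}(x) = ∑_m (L ℓ m)^r x^m`. The `ℤ`-span of
the sequences `ℓ ↦ L ℓ m` is closed under multiplication, by the linearization formula
`L ℓ i * L ℓ j = ∑_k C(i + j, k) C(k, i) C(k, j) L ℓ k`, which is proved by induction on `ℓ` from a
Wilf–Zeilberger pair. So for `ℓ < n` the sequence `ℓ ↦ S_ℓ^{(r)}(x)` agrees with an element of
that span, and it suffices to prove the divisibility for `ℓ ↦ L ℓ m`, where the two weighted sums
have closed forms with an explicit factor `n`.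
-/

open Finset

theorem natCast_choose_succ_right_eq (n k : ℕ) :
    ((k : ℤ) + 1) * n.choose (k + 1) = (n - k) * n.choose k := by
  rcases le_or_gt k n with h | h
  · have := Nat.choose_succ_right_eq n k
    zify [h] at this
    linarith
  · simp [Nat.choose_eq_zero_of_lt h, Nat.choose_eq_zero_of_lt (h.trans k.lt_succ_self)]

theorem natCast_add_one_mul_choose_eq (n k : ℕ) :
    ((n : ℤ) + 1) * n.choose k = (k + 1) * (n + 1).choose (k + 1) := by
  exact_mod_cast (Nat.add_one_mul_choose_eq n k).trans (mul_comm _ _)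

theorem natCast_choose_mul_succ_eq (n k : ℕ) :
    ((n : ℤ) + 1 - k) * (n + 1).choose k = (n + 1) * n.choose k := by
  have h := natCast_choose_succ_right_eq (n + 1) k
  push_cast at h
  linear_combination -h - natCast_add_one_mul_choose_eq n k

theorem natCast_succ_mul_choose_succ_add (ℓ k : ℕ) :
    ((ℓ : ℤ) + 1) * (ℓ + 1 + k).choose k = (ℓ + 1 + k) * (ℓ + k).choose k := by
  have h := natCast_choose_mul_succ_eq (ℓ + k) k
  rw [Nat.add_right_comm]
  push_cast at h ⊢
  linear_combination h

/-- `(-1) ^ m * (Polynomial.shiftedLegendre ℓ).coeff m`, the coefficient of `x ^ m` in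
`P_ℓ(2x + 1)`. -/
def legendreCoeff (ℓ m : ℕ) : ℤ := ℓ.choose m * (ℓ + m).choose m

theorem legendreCoeff_eq_zero_of_lt {ℓ m : ℕ} (h : ℓ < m) : legendreCoeff ℓ m = 0 := by
  simp [legendreCoeff, Nat.choose_eq_zero_of_lt h]

theorem legendreCoeff_zero_right (ℓ : ℕ) : legendreCoeff ℓ 0 = 1 := by
  simp [legendreCoeff]

theorem sub_mul_legendreCoeff_succ (ℓ m : ℕ) :
    ((ℓ : ℤ) + 1 - m) * legendreCoeff (ℓ + 1) m = (ℓ + 1 + m) * legendreCoeff ℓ m := by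
  unfold legendreCoeff
  linear_combination ((ℓ + 1 + m).choose m : ℤ) * natCast_choose_mul_succ_eq ℓ m
    + (ℓ.choose m : ℤ) * natCast_succ_mul_choose_succ_add ℓ m

def linearizationCoeff (i j k : ℕ) : ℤ := (i + j).choose k * k.choose i * k.choose j

theorem linearizationCoeff_comm (i j k : ℕ) :
    linearizationCoeff i j k = linearizationCoeff j i k := by
  rw [linearizationCoeff, linearizationCoeff, add_comm]
  ring

section Linearization

variable (i j : ℕ)

def linearizationTerm (ℓ k : ℕ) : ℤ :=
  linearizationCoeff i j k * (ℓ + 1).choose k * (ℓ + k).choose k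

theorem linearizationTerm_succ (ℓ k : ℕ) :
    ((k : ℤ) + 1) * (k + 1 - i) * (k + 1 - j) * linearizationTerm i j ℓ (k + 1) =
      (i + j - k) * (ℓ + 1 - k) * (ℓ + 1 + k) * linearizationTerm i j ℓ k := by
  have h1 := natCast_choose_succ_right_eq (i + j) k
  have h2 := natCast_choose_mul_succ_eq k i
  have h3 := natCast_choose_mul_succ_eq k j
  have h4 := natCast_choose_succ_right_eq (ℓ + 1) k
  have h5 := natCast_add_one_mul_choose_eq (ℓ + k) k
  push_cast at h1 h4 h5
  apply mul_left_cancel₀ (pow_ne_zero 2 k.cast_add_one_ne_zero : ((k : ℤ) + 1) ^ 2 ≠ 0)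
  simp only [linearizationTerm, linearizationCoeff, ← Nat.add_assoc]
  calc _ = ((k + 1) * ((i + j).choose (k + 1) : ℤ)) * ((k + 1 - i) * ((k + 1).choose i : ℤ)) *
          ((k + 1 - j) * ((k + 1).choose j : ℤ)) * ((k + 1) * ((ℓ + 1).choose (k + 1) : ℤ)) *
          ((k + 1) * ((ℓ + k + 1).choose (k + 1) : ℤ)) := by ring
    _ = ((i + j - k) * ((i + j).choose k : ℤ)) * ((k + 1) * (k.choose i : ℤ)) *
          ((k + 1) * (k.choose j : ℤ)) * ((ℓ + 1 - k) * ((ℓ + 1).choose k : ℤ)) *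
          ((ℓ + k + 1) * ((ℓ + k).choose k : ℤ)) := by rw [h1, h2, h3, h4, h5]
    _ = _ := by ring

/-- Zeilberger's certificate for the linearization sum. -/
def linearizationCert (ℓ k : ℕ) : ℤ := -2 * k * (k - i) * (k - j) * linearizationTerm i j ℓ k

theorem linearizationCert_succ_sub (ℓ k : ℕ) :
    ((ℓ : ℤ) + 1) *
      ((ℓ + 1 - i) * (ℓ + 1 - j) * (linearizationCoeff i j k * legendreCoeff (ℓ + 1) k)
        - (ℓ + 1 + i) * (ℓ + 1 + j) * (linearizationCoeff i j k * legendreCoeff ℓ k)) =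
      linearizationCert i j ℓ (k + 1) - linearizationCert i j ℓ k := by
  have h1 : ((ℓ : ℤ) + 1) * (linearizationCoeff i j k * legendreCoeff (ℓ + 1) k) =
      (ℓ + 1 + k) * linearizationTerm i j ℓ k := by
    simp only [legendreCoeff, linearizationTerm]
    linear_combination
      (linearizationCoeff i j k * (ℓ + 1).choose k) * natCast_succ_mul_choose_succ_add ℓ k
  have h2 : ((ℓ : ℤ) + 1) * (linearizationCoeff i j k * legendreCoeff ℓ k) =
      (ℓ + 1 - k) * linearizationTerm i j ℓ k := by
    simp only [legendreCoeff, linearizationTerm]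
    linear_combination
      (-linearizationCoeff i j k * (ℓ + k).choose k) * natCast_choose_mul_succ_eq ℓ k
  simp only [linearizationCert]
  push_cast
  linear_combination ((ℓ : ℤ) + 1 - i) * (ℓ + 1 - j) * h1 - (ℓ + 1 + i) * (ℓ + 1 + j) * h2
    + 2 * linearizationTerm_succ i j ℓ k

theorem sum_linearizationCoeff_mul_legendreCoeff_succ (ℓ : ℕ) :
    ((ℓ : ℤ) + 1 - i) * (ℓ + 1 - j) *
        ∑ k ∈ range (i + j + 1), linearizationCoeff i j k * legendreCoeff (ℓ + 1) k =
      (ℓ + 1 + i) * (ℓ + 1 + j) *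
        ∑ k ∈ range (i + j + 1), linearizationCoeff i j k * legendreCoeff ℓ k := by
  have hcert_zero : linearizationCert i j ℓ 0 = 0 := by simp [linearizationCert]
  have hcert_top : linearizationCert i j ℓ (i + j + 1) = 0 := by
    simp [linearizationCert, linearizationTerm, linearizationCoeff]
  have htele : ((ℓ : ℤ) + 1) *
      ((ℓ + 1 - i) * (ℓ + 1 - j) *
          ∑ k ∈ range (i + j + 1), linearizationCoeff i j k * legendreCoeff (ℓ + 1) k -
        (ℓ + 1 + i) * (ℓ + 1 + j) *
          ∑ k ∈ range (i + j + 1), linearizationCoeff i j k * legendreCoeff ℓ k) = 0 := by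
    rw [mul_sum, mul_sum, ← sum_sub_distrib, mul_sum,
      sum_congr rfl fun k _ => linearizationCert_succ_sub i j ℓ k, sum_range_sub, hcert_top,
      hcert_zero, sub_zero]
  exact sub_eq_zero.mp ((mul_eq_zero.mp htele).resolve_left (by positivity))

end Linearization

theorem legendreCoeff_mul_legendreCoeff (ℓ i j : ℕ) :
    legendreCoeff ℓ i * legendreCoeff ℓ j =
      ∑ k ∈ range (i + j + 1), linearizationCoeff i j k * legendreCoeff ℓ k := by
  wlog hji : j ≤ i generalizing i j
  · simpa only [mul_comm, add_comm j i, linearizationCoeff_comm j i] using this j i (by omega)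
  -- The recurrence can be cancelled only for `ℓ ≥ max i j`; below that both sides vanish.
  rcases lt_or_ge ℓ i with hℓ | hℓ
  · rw [legendreCoeff_eq_zero_of_lt hℓ, zero_mul, eq_comm]
    refine sum_eq_zero fun k _ => ?_
    rcases lt_or_ge k i with hk | hk
    · simp [linearizationCoeff, Nat.choose_eq_zero_of_lt hk]
    · simp [legendreCoeff_eq_zero_of_lt (hℓ.trans_le hk)]
  induction ℓ, hℓ using Nat.le_induction with
  | base =>
    rw [sum_eq_single_of_mem i (mem_range.mpr (by omega))]
    · simp only [linearizationCoeff, legendreCoeff, Nat.choose_self]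
      rw [Nat.choose_symm_add (a := i) (b := j)]
      ring
    · intro k _ hki
      rcases lt_or_gt_of_ne hki with hk | hk
      · simp [linearizationCoeff, Nat.choose_eq_zero_of_lt hk]
      · simp [legendreCoeff_eq_zero_of_lt hk]
  | succ ℓ hiℓ ih =>
    have hi : (i : ℤ) ≤ ℓ := by exact_mod_cast hiℓ
    have hj : (j : ℤ) ≤ ℓ := by exact_mod_cast hji.trans hiℓ
    have hne : ((ℓ : ℤ) + 1 - i) * (ℓ + 1 - j) ≠ 0 := by nlinarith
    apply mul_left_cancel₀ hne
    rw [sum_linearizationCoeff_mul_legendreCoeff_succ, ← ih]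
    linear_combination ((ℓ : ℤ) + 1 - j) * legendreCoeff (ℓ + 1) j * sub_mul_legendreCoeff_succ ℓ i
      + ((ℓ : ℤ) + 1 + i) * legendreCoeff ℓ i * sub_mul_legendreCoeff_succ ℓ j

def legendreSpan : Submodule ℤ (ℕ → ℤ) :=
  Submodule.span ℤ (Set.range fun m ℓ => legendreCoeff ℓ m)

theorem legendreCoeff_mem_legendreSpan (m : ℕ) : (fun ℓ => legendreCoeff ℓ m) ∈ legendreSpan :=
  Submodule.subset_span ⟨m, rfl⟩

theorem one_mem_legendreSpan : (1 : ℕ → ℤ) ∈ legendreSpan := by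
  convert legendreCoeff_mem_legendreSpan 0
  simp [legendreCoeff_zero_right]

theorem mul_mem_legendreSpan {f g : ℕ → ℤ} (hf : f ∈ legendreSpan) (hg : g ∈ legendreSpan) :
    f * g ∈ legendreSpan := by
  have hle : legendreSpan * legendreSpan ≤ legendreSpan := by
    rw [legendreSpan, Submodule.span_mul_span, Submodule.span_le]
    rintro _ ⟨_, ⟨i, rfl⟩, _, ⟨j, rfl⟩, rfl⟩
    have hlin : ((fun ℓ => legendreCoeff ℓ i) * fun ℓ => legendreCoeff ℓ j) =
        ∑ k ∈ range (i + j + 1), linearizationCoeff i j k • fun ℓ => legendreCoeff ℓ k := by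
      ext ℓ
      simp [legendreCoeff_mul_legendreCoeff]
    change ((fun ℓ => legendreCoeff ℓ i) * fun ℓ => legendreCoeff ℓ j) ∈ legendreSpan
    rw [hlin]
    exact sum_mem fun k _ => Submodule.smul_mem _ _ (legendreCoeff_mem_legendreSpan k)
  exact hle (Submodule.mul_mem_mul hf hg)

def legendreSubalgebra : Subalgebra ℤ (ℕ → ℤ) :=
  legendreSpan.toSubalgebra one_mem_legendreSpan fun _ _ => mul_mem_legendreSpan

theorem dvd_sum_mul_of_mem_legendreSpan {d : ℤ} {n : ℕ} {w f : ℕ → ℤ}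
    (hw : ∀ m, d ∣ ∑ k ∈ range n, w k * legendreCoeff k m) (hf : f ∈ legendreSpan) :
    d ∣ ∑ k ∈ range n, w k * f k := by
  induction hf using Submodule.span_induction with
  | mem _ hf => obtain ⟨m, rfl⟩ := hf; exact hw m
  | zero => simp
  | add f g _ _ hf hg => simpa [mul_add, sum_add_distrib] using dvd_add hf hg
  | smul c f _ hf =>
    simpa [mul_left_comm _ c, ← mul_sum] using dvd_mul_of_dvd_right hf c

theorem sum_range_two_mul_add_one_mul_legendreCoeff (n m : ℕ) :
    ∑ k ∈ range n, (2 * k + 1 : ℤ) * legendreCoeff k m =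
      n * n.choose (m + 1) * (n + m).choose m := by
  induction n with
  | zero => simp
  | succ n ih =>
    have hpascal : ((n + 1).choose (m + 1) : ℤ) = n.choose m + n.choose (m + 1) := by
      exact_mod_cast Nat.choose_succ_succ' n m
    rw [sum_range_succ, ih, legendreCoeff]
    push_cast
    linear_combination -((n + 1).choose (m + 1) : ℤ) * natCast_succ_mul_choose_succ_add n m
      - ((n : ℤ) + 1 + m) * (n + m).choose m * hpascal
      - ((n + m).choose m : ℤ) * natCast_choose_succ_right_eq n m

theorem sum_range_succ_neg_one_pow_mul_two_mul_add_one_mul_legendreCoeff (n m : ℕ) :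
    ∑ k ∈ range (n + 1), (-1 : ℤ) ^ k * (2 * k + 1) * legendreCoeff k m =
      (-1) ^ n * (n + 1) * n.choose m * (n + 1 + m).choose m := by
  induction n with
  | zero => cases m <;> simp [legendreCoeff]
  | succ n ih =>
    have h := natCast_succ_mul_choose_succ_add (n + 1) m
    rw [sum_range_succ, ih, legendreCoeff]
    push_cast at h ⊢
    linear_combination (-1 : ℤ) ^ n * (-((n + 1 + m).choose m : ℤ) * natCast_choose_mul_succ_eq n m
      + ((n + 1).choose m : ℤ) * h)

theorem dvd_sum_range_two_mul_add_one_mul_legendreCoeff (n m : ℕ) :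
    (n : ℤ) ∣ ∑ k ∈ range n, (2 * k + 1 : ℤ) * legendreCoeff k m := by
  rw [sum_range_two_mul_add_one_mul_legendreCoeff, mul_assoc]
  exact dvd_mul_right _ _

theorem dvd_sum_range_neg_one_pow_mul_two_mul_add_one_mul_legendreCoeff (n m : ℕ) :
    (n : ℤ) ∣ ∑ k ∈ range n, (-1 : ℤ) ^ k * (2 * k + 1) * legendreCoeff k m := by
  cases n with
  | zero => simp
  | succ n =>
    rw [sum_range_succ_neg_one_pow_mul_two_mul_add_one_mul_legendreCoeff, Nat.cast_succ]
    exact dvd_mul_of_dvd_left (dvd_mul_of_dvd_left (dvd_mul_left _ _) _) _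

theorem sum_range_succ_choose_pow_mul_pow_eq {r k n : ℕ} (hr : r ≠ 0) (hk : k < n) (x : ℤ) :
    ∑ j ∈ range (k + 1), (k.choose j : ℤ) ^ r * ((k + j).choose j : ℤ) ^ r * x ^ j =
      ∑ j ∈ range n, x ^ j * legendreCoeff k j ^ r := by
  calc _ = ∑ j ∈ range (k + 1), x ^ j * legendreCoeff k j ^ r :=
        sum_congr rfl fun j _ => by rw [legendreCoeff, mul_pow, mul_comm]
    _ = _ := by
        refine sum_subset (range_subset_range.mpr hk) fun j _ hj => ?_
        have hkj : k < j := by simp only [mem_range, not_lt] at hj; omega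
        rw [legendreCoeff_eq_zero_of_lt hkj, zero_pow hr, mul_zero]

theorem schmidt_polynomial_divisibility_general (n : ℕ) (r : ℕ) (hr : 2 ≤ r) (x : ℤ) :
    ((n : ℤ) ∣ ∑ k ∈ range n, (2 * k + 1 : ℤ) *
        (∑ j ∈ range (k + 1),
          (k.choose j : ℤ) ^ r * ((k + j).choose j : ℤ) ^ r * x ^ j)) ∧
    ((n : ℤ) ∣ ∑ k ∈ range n, (-1 : ℤ) ^ k * (2 * k + 1) *
        (∑ j ∈ range (k + 1),
          (k.choose j : ℤ) ^ r * ((k + j).choose j : ℤ) ^ r * x ^ j)) := by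
  let f : ℕ → ℤ := ∑ j ∈ range n, x ^ j • (fun ℓ => legendreCoeff ℓ j) ^ r
  have hf : f ∈ legendreSpan := show f ∈ legendreSubalgebra from
    Subalgebra.sum_mem _ fun j _ =>
      Subalgebra.smul_mem _ (Subalgebra.pow_mem _ (legendreCoeff_mem_legendreSpan j) r) _
  have hS : ∀ k ∈ range n,
      ∑ j ∈ range (k + 1), (k.choose j : ℤ) ^ r * ((k + j).choose j : ℤ) ^ r * x ^ j = f k :=
    fun k hk => by
      rw [sum_range_succ_choose_pow_mul_pow_eq (by omega) (mem_range.mp hk)]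
      simp [f]
  constructor
  · convert dvd_sum_mul_of_mem_legendreSpan
      (dvd_sum_range_two_mul_add_one_mul_legendreCoeff n) hf using 1
    exact sum_congr rfl fun k hk => by rw [hS k hk]
  · convert dvd_sum_mul_of_mem_legendreSpan
      (dvd_sum_range_neg_one_pow_mul_two_mul_add_one_mul_legendreCoeff n) hf using 1
    exact sum_congr rfl fun k hk => by rw [hS k hk]

theorem schmidt_polynomial_divisibility (n : ℕ) (hn : 0 < n) (r : ℕ) (hr : 2 ≤ r) (x : ℤ) :
    ((n : ℤ) ∣ ∑ k ∈ range n, (2 * k + 1 : ℤ) *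
        (∑ j ∈ range (k + 1),
          (k.choose j : ℤ) ^ r * ((k + j).choose j : ℤ) ^ r * x ^ j)) ∧
    ((n : ℤ) ∣ ∑ k ∈ range n, (-1 : ℤ) ^ k * (2 * k + 1) *
        (∑ j ∈ range (k + 1),
          (k.choose j : ℤ) ^ r * ((k + j).choose j : ℤ) ^ r * x ^ j)) :=
  schmidt_polynomial_divisibility_general n r hr x
end
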